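/- arXiv:2102.12562 — 9 statements merged into one kernel-verified Lean document; each statement's English description precedes it below -/
import Mathlib

section
/- Let M be a nonempty compact subset of the Euclidean space ℝ^d and let τ > 0 be such that M has reach at least τ. Let m ∈ M and let v ∈ ℝ^d satisfy ⟨v, w⟩ = 0 for every w in the tangent cone of M at m (i.e. v is a normal vector at m) and ‖v‖ < τ. Then m is the unique nearest point of m + v in M; in particular infDist(m + v, M) = ‖v‖. -/
/-!
Federer's argument. Uniqueness of nearest points makes the nearest-point map continuous, so
`infDist · M` grows at unit speed when one moves from a point straight away from its nearest
point. Let `x` have nearest point `p` at distance `r < R < τ`. For `a < 1`, a maximum of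
`infDist · M - a * dist · x` on the closed ball of radius `R - r` about `x` therefore lies on the
sphere; letting `a → 1` yields a point `z` on that sphere at distance `R` from `M`, which forces
`z` onto the ray from `p` through `x`. Since the open ball of radius `R` about `z` misses `M`,
`2 R ⟪x - p, q - p⟫ ≤ ‖x - p‖ ‖q - p‖²` for all `q ∈ M`.

For a normal vector `v` at `m`, the nearest points `c s` of `m + s • v` satisfy
`c s - m = o(s)`: otherwise a limit direction of `c s - m` would be a tangent vector `t` with
`⟪v, t⟫ > 0`. Applying the inequality at `c s`, dividing by `s` and letting `s → 0` gives
`2 R ⟪v, q - m⟫ ≤ ‖v‖ ‖q - m‖²` for all `R < τ`; with `R > ‖v‖` this says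
`‖m + v - q‖ > ‖v‖` for every `q ∈ M` other than `m`.
-/

/-- `M` has reach at least `τ`: every point at distance less than `τ` from `M`
has a unique nearest point in `M`. -/
def HasReachAtLeast {d : ℕ} (M : Set (EuclideanSpace ℝ (Fin d))) (τ : ℝ) : Prop :=
  ∀ x : EuclideanSpace ℝ (Fin d), Metric.infDist x M < τ →
    ∃! p, p ∈ M ∧ ‖x - p‖ = Metric.infDist x M

open Metric Filter Topology Set
open scoped RealInnerProductSpace

def IsNearestPoint {X : Type*} [PseudoMetricSpace X] (A : Set X) (x p : X) : Prop :=
  p ∈ A ∧ dist x p = infDist x A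

section ProperMetric

variable {X : Type*} [PseudoMetricSpace X] [ProperSpace X] {A : Set X}

theorem IsClosed.exists_isNearestPoint (hA : IsClosed A) (hne : A.Nonempty) (x : X) :
    ∃ p, IsNearestPoint A x p :=
  let ⟨p, hp, h⟩ := hA.exists_infDist_eq_dist hne x
  ⟨p, hp, h.symm⟩

theorem IsClosed.tendsto_of_isNearestPoint (hA : IsClosed A) {x p : X}
    (huniq : ∀ q, IsNearestPoint A x q → q = p) {ι : Type*} {l : Filter ι} {y q : ι → X}
    (hy : Tendsto y l (𝓝 x)) (hq : ∀ i, IsNearestPoint A (y i) (q i)) :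
    Tendsto q l (𝓝 p) := by
  refine (isCompact_closedBall x (infDist x A + 2)).tendsto_nhds_of_unique_mapClusterPt ?_ ?_
  · filter_upwards [hy (ball_mem_nhds x one_pos)] with i hi
    rw [mem_preimage, mem_ball] at hi
    have h₁ := dist_triangle_left (q i) x (y i)
    have h₂ : infDist (y i) A ≤ infDist x A + dist (y i) x := infDist_le_infDist_add_dist
    rw [(hq i).2] at h₁
    rw [mem_closedBall]
    linarith
  · intro z _ hz
    obtain ⟨U, hUl, hqU⟩ := mapClusterPt_iff_ultrafilter.1 hz
    have hyU := hy.mono_left hUl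
    have hinfDist : Tendsto (fun i => dist (y i) (q i)) U (𝓝 (infDist x A)) :=
      (((continuous_infDist_pt A).tendsto x).comp hyU).congr fun i => ((hq i).2).symm
    exact huniq z ⟨hA.mem_of_tendsto hqU (Eventually.of_forall fun i => (hq i).1),
      tendsto_nhds_unique (hyU.dist hqU) hinfDist⟩

end ProperMetric

section InnerProductSpace

variable {E : Type*} [NormedAddCommGroup E] [InnerProductSpace ℝ E] [ProperSpace E] {A : Set E}

theorem IsClosed.eventually_add_mul_le_infDist_add_smul (hA : IsClosed A) {y p : E}
    (hp : IsNearestPoint A y p) (huniq : ∀ q, IsNearestPoint A y q → q = p)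
    (hy : 0 < infDist y A) {a : ℝ} (ha₀ : 0 ≤ a) (ha₁ : a < 1) :
    ∀ᶠ s in 𝓝[>] (0 : ℝ),
      infDist y A + a * s ≤ infDist (y + s • (infDist y A)⁻¹ • (y - p)) A := by
  set r := infDist y A
  set e := r⁻¹ • (y - p)
  have hyp : ‖y - p‖ = r := by rw [← dist_eq_norm]; exact hp.2
  have he : ‖e‖ = 1 := by
    rw [norm_smul, hyp, norm_inv, Real.norm_of_nonneg hy.le, inv_mul_cancel₀ hy.ne']
  choose q hq using hA.exists_isNearestPoint ⟨p, hp.1⟩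
  have hcurve : Tendsto (fun s : ℝ => y + s • e) (𝓝[>] 0) (𝓝 y) := by
    have : Continuous (fun s : ℝ => y + s • e) := by fun_prop
    simpa using (this.tendsto 0).mono_left nhdsWithin_le_nhds
  have hq_lim := hA.tendsto_of_isNearestPoint huniq hcurve fun s => hq (y + s • e)
  have hinner : Tendsto (fun s : ℝ => ⟪e, y - q (y + s • e)⟫) (𝓝[>] 0) (𝓝 r) := by
    have h₁ : ⟪e, y - p⟫ = r := by
      rw [real_inner_smul_left, real_inner_self_eq_norm_sq, hyp]; field_simp
    rw [← h₁]
    exact tendsto_const_nhds.inner (𝕜 := ℝ) (tendsto_const_nhds.sub hq_lim)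
  filter_upwards [self_mem_nhdsWithin,
    hinner.eventually (lt_mem_nhds (mul_lt_of_lt_one_left hy ha₁))] with s (hs : 0 < s) hs_inner
  set q' := q (y + s • e)
  have hfar : r ≤ ‖y - q'‖ := by rw [← dist_eq_norm]; exact infDist_le_dist_of_mem (hq _).1
  have hsq : infDist (y + s • e) A ^ 2 = ‖y - q'‖ ^ 2 + 2 * s * ⟪e, y - q'⟫ + s ^ 2 := by
    rw [← (hq _).2, dist_eq_norm, show y + s • e - q' = (y - q') + s • e by abel,
      norm_add_sq_real, real_inner_smul_right, real_inner_comm, norm_smul, he,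
      Real.norm_of_nonneg hs.le]
    ring
  have hr_sq : r ^ 2 ≤ ‖y - q'‖ ^ 2 := pow_le_pow_left₀ hy.le hfar 2
  have has_sq : (a * s) ^ 2 ≤ s ^ 2 :=
    pow_le_pow_left₀ (by positivity) (mul_le_of_le_one_left hs.le ha₁.le) 2
  have hge : (r + a * s) ^ 2 ≤ infDist (y + s • e) A ^ 2 := by
    rw [hsq]; nlinarith [mul_lt_mul_of_pos_left hs_inner hs]
  exact le_of_pow_le_pow_left₀ two_ne_zero infDist_nonneg hge

theorem IsClosed.exists_mem_sphere_add_mul_le_infDist (hA : IsClosed A) {x : E} {σ : ℝ}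
    (hσ : 0 < σ) (hx : 0 < infDist x A)
    (huniq : ∀ z ∈ closedBall x σ, ∃! p, IsNearestPoint A z p) {a : ℝ} (ha₀ : 0 ≤ a)
    (ha₁ : a < 1) :
    ∃ z ∈ sphere x σ, infDist x A + a * σ ≤ infDist z A := by
  set F : E → ℝ := fun z => infDist z A - a * dist z x
  have hF : Continuous F := by fun_prop
  obtain ⟨z₀, hz₀, hmax⟩ :=
    (isCompact_closedBall x σ).exists_isMaxOn (nonempty_closedBall.2 hσ.le) hF.continuousOn
  have hFx : infDist x A ≤ F z₀ := by simpa [F] using hmax (mem_closedBall_self hσ.le)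
  have hz₀x : dist z₀ x ≤ σ := hz₀
  rcases hz₀x.eq_or_lt with hbd | hint
  · exact ⟨z₀, hbd, by simp only [F, hbd] at hFx; linarith⟩
  exfalso
  obtain ⟨p₀, hp₀, huniq₀⟩ := huniq z₀ hz₀
  have hr₀ : 0 < infDist z₀ A := by
    have : 0 ≤ a * dist z₀ x := by positivity
    simp only [F] at hFx; linarith
  set e := (infDist z₀ A)⁻¹ • (z₀ - p₀)
  have hgrow : ∀ᶠ s in 𝓝[>] (0 : ℝ),
      infDist z₀ A + (1 + a) / 2 * s ≤ infDist (z₀ + s • e) A :=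
    hA.eventually_add_mul_le_infDist_add_smul hp₀ huniq₀ hr₀ (by linarith) (by linarith)
  have hstay : ∀ᶠ s in 𝓝[>] (0 : ℝ), z₀ + s • e ∈ closedBall x σ := by
    have hcont : Continuous (fun s : ℝ => z₀ + s • e) := by fun_prop
    have := (hcont.tendsto 0).mono_left (nhdsWithin_le_nhds (s := Ioi 0))
    simp only [zero_smul, add_zero] at this
    exact this.eventually (mem_of_superset (isOpen_ball.mem_nhds (mem_ball.2 hint))
      ball_subset_closedBall)
  obtain ⟨s, hs, hgrow_s, hstay_s⟩ :=
    ((eventually_mem_nhdsWithin (a := (0 : ℝ)) (s := Ioi 0)).and (hgrow.and hstay)).exists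
  rw [mem_Ioi] at hs
  have hmove : dist (z₀ + s • e) x ≤ dist z₀ x + s := by
    have he : ‖e‖ = 1 := by
      rw [norm_smul, ← dist_eq_norm, hp₀.2, norm_inv, Real.norm_of_nonneg hr₀.le,
        inv_mul_cancel₀ hr₀.ne']
    calc dist (z₀ + s • e) x ≤ dist (z₀ + s • e) z₀ + dist z₀ x := dist_triangle _ _ _
      _ = dist z₀ x + s := by
        rw [dist_eq_norm, add_sub_cancel_left, norm_smul, he, Real.norm_of_nonneg hs.le]
        ring
  have hFs : F (z₀ + s • e) ≤ F z₀ := hmax hstay_s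
  simp only [F] at hFs
  nlinarith [mul_le_mul_of_nonneg_left hmove ha₀]

theorem IsClosed.exists_mem_sphere_add_le_infDist (hA : IsClosed A) {x : E} {σ : ℝ}
    (hσ : 0 < σ) (hx : 0 < infDist x A)
    (huniq : ∀ z ∈ closedBall x σ, ∃! p, IsNearestPoint A z p) :
    ∃ z ∈ sphere x σ, infDist x A + σ ≤ infDist z A := by
  have hbound := fun a (ha₀ : 0 ≤ a) (ha₁ : a < 1) =>
    hA.exists_mem_sphere_add_mul_le_infDist hσ hx huniq ha₀ ha₁
  have hne : (sphere x σ).Nonempty :=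
    let ⟨z, hz, _⟩ := hbound 0 le_rfl one_pos
    ⟨z, hz⟩
  obtain ⟨z, hz, hmax⟩ :=
    (isCompact_sphere x σ).exists_isMaxOn hne (continuous_infDist_pt A).continuousOn
  refine ⟨z, hz, ?_⟩
  have hlim :
      Tendsto (fun a : ℝ => infDist x A + a * σ) (𝓝[<] 1) (𝓝 (infDist x A + 1 * σ)) :=
    ((continuous_const.add (continuous_id.mul continuous_const)).tendsto 1).mono_left
      nhdsWithin_le_nhds
  rw [one_mul] at hlim
  refine le_of_tendsto hlim ?_
  filter_upwards [Ioo_mem_nhdsLT one_pos] with a ha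
  obtain ⟨z', hz', hz'A⟩ := hbound a ha.1.le ha.2
  exact hz'A.trans (hmax hz')

omit [ProperSpace E] in
theorem two_mul_inner_le_of_le_norm_sub {x p z q : E} {r σ : ℝ} (hr : 0 < r)
    (hxp : ‖x - p‖ = r) (hzx : ‖z - x‖ = σ) (hzp : r + σ ≤ ‖z - p‖)
    (hzq : r + σ ≤ ‖z - q‖) :
    2 * (r + σ) * ⟪x - p, q - p⟫ ≤ r * ‖q - p‖ ^ 2 := by
  have hσ : 0 ≤ σ := hzx ▸ norm_nonneg _
  have hcollinear : r • (z - x) = σ • (x - p) := by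
    have hle : ‖z - p‖ ≤ σ + r := by
      rw [← sub_add_sub_cancel z x p, ← hzx, ← hxp]; exact norm_add_le _ _
    have hsq : ‖(z - x) + (x - p)‖ ^ 2 = (σ + r) ^ 2 := by
      rw [sub_add_sub_cancel]; congr 1; linarith
    rw [norm_add_sq_real, hzx, hxp] at hsq
    have hinner : ⟪z - x, x - p⟫ = ‖z - x‖ * ‖x - p‖ := by rw [hzx, hxp]; linarith
    rw [← hzx, ← hxp]
    exact inner_eq_norm_mul_iff_real.1 hinner
  have hzq' : r • (z - q) = (r + σ) • (x - p) - r • (q - p) := by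
    rw [show z - q = (z - x) + (x - p) - (q - p) by abel, smul_sub, smul_add, hcollinear,
      add_smul, add_comm (r • _)]
  have hsq : (r * (r + σ)) ^ 2 ≤ ‖r • (z - q)‖ ^ 2 := by
    rw [norm_smul, Real.norm_of_nonneg hr.le]
    exact pow_le_pow_left₀ (by positivity) (mul_le_mul_of_nonneg_left hzq hr.le) 2
  rw [hzq', norm_sub_sq_real, norm_smul, norm_smul, Real.norm_of_nonneg hr.le,
    Real.norm_of_nonneg (by linarith), hxp, real_inner_smul_left, real_inner_smul_right] at hsq
  nlinarith

theorem tendsto_inv_smul_sub_of_inner_tangentConeAt_eq_zero {M : Set E} {m v : E}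
    (hv : ∀ w ∈ tangentConeAt ℝ M m, ⟪v, w⟫ = 0) {c : ℝ → E} (hcM : ∀ s, c s ∈ M)
    (hc : ∀ s, ‖m + s • v - c s‖ ≤ ‖s • v‖) :
    Tendsto (fun s => s⁻¹ • (c s - m)) (𝓝[>] 0) (𝓝 0) := by
  set w := fun s => c s - m
  have hkey : ∀ s, 0 < s → ‖w s‖ ^ 2 ≤ 2 * s * ⟪v, w s⟫ := by
    intro s hs
    have h := pow_le_pow_left₀ (norm_nonneg _) (hc s) 2
    rw [show m + s • v - c s = s • v - w s by simp only [w]; abel, norm_sub_sq_real,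
      real_inner_smul_left] at h
    linarith
  have hw : Tendsto w (𝓝[>] 0) (𝓝 0) := by
    refine squeeze_zero_norm' (f := w) (a := fun s => 2 * s * ‖v‖) ?_ ?_
    · filter_upwards [self_mem_nhdsWithin] with s (hs : 0 < s)
      have h := (hkey s hs).trans (mul_le_mul_of_nonneg_left (real_inner_le_norm v (w s))
        (by positivity))
      rcases (norm_nonneg (w s)).eq_or_lt with h0 | hpos
      · rw [← h0]; positivity
      · nlinarith
    · have : Continuous (fun s : ℝ => 2 * s * ‖v‖) := by fun_prop
      simpa using (this.tendsto 0).mono_left nhdsWithin_le_nhds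
  -- Otherwise, along the `s` with `ε * s ≤ ‖w s‖`, a limit direction `t` of `w s` is tangent
  -- and satisfies `ε / 2 ≤ ⟪v, t⟫`.
  rw [Metric.tendsto_nhds]
  intro ε hε
  by_contra hbad
  rw [not_eventually] at hbad
  set l := 𝓝[>] (0 : ℝ) ⊓ 𝓟 {s | ¬ dist (s⁻¹ • w s) 0 < ε}
  have : l.NeBot := frequently_iff_neBot.1 hbad
  have hl : ∀ᶠ s in l, 0 < s ∧ ε * s ≤ ‖w s‖ := by
    filter_upwards [inf_le_left (a := 𝓝[>] (0 : ℝ)) self_mem_nhdsWithin,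
      mem_inf_of_right (mem_principal_self _)] with s (hs : 0 < s) (hbad_s : ¬ _ < ε)
    rw [not_lt, dist_zero_right, norm_smul, norm_inv, Real.norm_of_nonneg hs.le,
      le_inv_mul_iff₀ hs] at hbad_s
    exact ⟨hs, by linarith⟩
  set u := fun s => ‖w s‖⁻¹ • w s
  have hu : ∀ᶠ s in l, u s ∈ sphere (0 : E) 1 ∧ ε / 2 ≤ ⟪v, u s⟫ := by
    filter_upwards [hl] with s ⟨hs, hεs⟩
    have hw_pos : 0 < ‖w s‖ := lt_of_lt_of_le (by positivity) hεs
    refine ⟨by simp [u, norm_smul, hw_pos.ne'], ?_⟩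
    rw [real_inner_smul_right, le_inv_mul_iff₀ hw_pos]
    nlinarith [hkey s hs]
  obtain ⟨t, -, ht⟩ := (isCompact_sphere (0 : E) 1).exists_mapClusterPt_of_frequently
    (hu.mono fun s hs => hs.1).frequently
  obtain ⟨U, hUl, hUt⟩ := mapClusterPt_iff_ultrafilter.1 ht
  have htan : t ∈ tangentConeAt ℝ M m :=
    mem_tangentConeAt_of_seq (U : Filter ℝ) (fun s => ‖w s‖⁻¹) w
      (hw.mono_left (hUl.trans inf_le_left))
      (Eventually.of_forall fun s => by simpa only [w, add_sub_cancel] using hcM s) hUt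
  have hlim : ε / 2 ≤ ⟪v, t⟫ :=
    ge_of_tendsto (((continuous_const.inner continuous_id).tendsto t).comp hUt)
      ((hu.mono fun s hs => hs.2).filter_mono hUl)
  rw [hv t htan] at hlim
  linarith

end InnerProductSpace

namespace HasReachAtLeast

variable {d : ℕ} {M : Set (EuclideanSpace ℝ (Fin d))} {τ : ℝ}

theorem existsUnique_isNearestPoint (hreach : HasReachAtLeast M τ) {x : EuclideanSpace ℝ (Fin d)}
    (hx : infDist x M < τ) : ∃! p, IsNearestPoint M x p := by
  simpa only [IsNearestPoint, dist_eq_norm] using hreach x hx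

theorem two_mul_inner_le (hreach : HasReachAtLeast M τ) (hM : IsClosed M)
    {x p : EuclideanSpace ℝ (Fin d)} (hp : IsNearestPoint M x p) {R : ℝ} (hxR : infDist x M < R)
    (hRτ : R < τ) {q : EuclideanSpace ℝ (Fin d)} (hq : q ∈ M) :
    2 * R * ⟪x - p, q - p⟫ ≤ ‖x - p‖ * ‖q - p‖ ^ 2 := by
  have hxp : ‖x - p‖ = infDist x M := by rw [← dist_eq_norm]; exact hp.2
  rcases (infDist_nonneg (x := x) (s := M)).eq_or_lt with hzero | hpos
  · have : x - p = 0 := by rw [← norm_eq_zero, hxp, ← hzero]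
    simp [this]
  have huniq : ∀ z ∈ closedBall x (R - infDist x M), ∃! p, IsNearestPoint M z p := by
    intro z hz
    refine hreach.existsUnique_isNearestPoint (lt_of_le_of_lt ?_ hRτ)
    have := infDist_le_infDist_add_dist (x := z) (y := x) (s := M)
    rw [mem_closedBall] at hz
    linarith
  obtain ⟨z, hz, hzM⟩ := hM.exists_mem_sphere_add_le_infDist (sub_pos.2 hxR) hpos huniq
  have hfar : ∀ q ∈ M, infDist x M + (R - infDist x M) ≤ ‖z - q‖ := fun q hq =>
    hzM.trans (dist_eq_norm z q ▸ infDist_le_dist_of_mem hq)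
  simpa only [hxp, add_sub_cancel] using
    two_mul_inner_le_of_le_norm_sub hpos hxp (mem_sphere_iff_norm.1 hz) (hfar p hp.1) (hfar q hq)

theorem two_mul_inner_le_of_inner_tangentConeAt_eq_zero (hreach : HasReachAtLeast M τ)
    (hM : IsClosed M) {m v : EuclideanSpace ℝ (Fin d)} (hm : m ∈ M)
    (hv : ∀ w ∈ tangentConeAt ℝ M m, ⟪v, w⟫ = 0) {R : ℝ} (hR : 0 < R) (hRτ : R < τ)
    {q : EuclideanSpace ℝ (Fin d)} (hq : q ∈ M) :
    2 * R * ⟪v, q - m⟫ ≤ ‖v‖ * ‖q - m‖ ^ 2 := by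
  choose proj hproj using hM.exists_isNearestPoint ⟨m, hm⟩
  set c := fun s : ℝ => proj (m + s • v)
  have hdist : ∀ s : ℝ, infDist (m + s • v) M ≤ ‖s • v‖ := fun s => by
    have h := infDist_le_dist_of_mem (x := m + s • v) hm
    rwa [dist_eq_norm, add_sub_cancel_left] at h
  have hc : ∀ s : ℝ, ‖m + s • v - c s‖ ≤ ‖s • v‖ := fun s => by
    rw [← dist_eq_norm, (hproj _).2]; exact hdist s
  have hscaled : Tendsto (fun s => s⁻¹ • (c s - m)) (𝓝[>] 0) (𝓝 0) :=
    tendsto_inv_smul_sub_of_inner_tangentConeAt_eq_zero hv (fun s => (hproj _).1) hc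
  have hpos : ∀ᶠ s in 𝓝[>] (0 : ℝ), 0 < s := self_mem_nhdsWithin
  have hc_lim : Tendsto c (𝓝[>] 0) (𝓝 m) := by
    have h := tendsto_const_nhds (x := m) |>.add
      ((tendsto_id.mono_left (nhdsWithin_le_nhds (s := Ioi (0 : ℝ)))).smul hscaled)
    rw [zero_smul, add_zero] at h
    refine h.congr' (hpos.mono fun s hs => ?_)
    simp [smul_smul, mul_inv_cancel₀ hs.ne']
  have hnormal_lim : Tendsto (fun s => s⁻¹ • (m + s • v - c s)) (𝓝[>] 0) (𝓝 v) := by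
    have h := tendsto_const_nhds (x := v) |>.sub hscaled
    rw [sub_zero] at h
    refine h.congr' (hpos.mono fun s hs => ?_)
    dsimp only
    rw [show m + s • v - c s = s • v - (c s - m) by abel, smul_sub s⁻¹ (s • v), smul_smul,
      inv_mul_cancel₀ hs.ne', one_smul]
  have hnear : ∀ᶠ s in 𝓝[>] (0 : ℝ), s * ‖v‖ < R := by
    have : Continuous (fun s : ℝ => s * ‖v‖) := by fun_prop
    exact ((this.tendsto 0).mono_left nhdsWithin_le_nhds).eventually
      (gt_mem_nhds (by simpa using hR))
  have hineq : ∀ᶠ s in 𝓝[>] (0 : ℝ),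
      2 * R * ⟪s⁻¹ • (m + s • v - c s), q - c s⟫ ≤
        ‖s⁻¹ • (m + s • v - c s)‖ * ‖q - c s‖ ^ 2 := by
    filter_upwards [hpos, hnear] with s hs hsR
    have hxR : infDist (m + s • v) M < R := by
      refine (hdist s).trans_lt ?_
      rwa [norm_smul, Real.norm_of_nonneg hs.le]
    have h := hreach.two_mul_inner_le hM (hproj _) hxR hRτ hq
    rw [real_inner_smul_left, norm_smul, norm_inv, Real.norm_of_nonneg hs.le]
    linarith [mul_le_mul_of_nonneg_left h (inv_nonneg.2 hs.le)]
  exact le_of_tendsto_of_tendsto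
    ((tendsto_const_nhds.mul (hnormal_lim.inner (tendsto_const_nhds.sub hc_lim))))
    ((hnormal_lim.norm.mul ((tendsto_const_nhds.sub hc_lim).norm.pow 2))) hineq

end HasReachAtLeast

theorem normal_vector_unique_nearest_point_general {d : ℕ}
    (M : Set (EuclideanSpace ℝ (Fin d))) (hMc : IsCompact M)
    (τ : ℝ) (hreach : HasReachAtLeast M τ)
    (m : EuclideanSpace ℝ (Fin d)) (hm : m ∈ M)
    (v : EuclideanSpace ℝ (Fin d))
    (hv : ∀ w ∈ tangentConeAt ℝ M m, (inner ℝ v w : ℝ) = 0)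
    (hvτ : ‖v‖ < τ) :
    Metric.infDist (m + v) M = ‖v‖ ∧
      (∀ p ∈ M, ‖m + v - p‖ = Metric.infDist (m + v) M → p = m) := by
  obtain ⟨R, hvR, hRτ⟩ := exists_between hvτ
  have hR : 0 < R := (norm_nonneg v).trans_lt hvR
  have hgap : ∀ p ∈ M,
      R * ‖v‖ ^ 2 + (R - ‖v‖) * ‖p - m‖ ^ 2 ≤ R * ‖m + v - p‖ ^ 2 := by
    intro p hp
    have h := hreach.two_mul_inner_le_of_inner_tangentConeAt_eq_zero hMc.isClosed hm hv
      hR hRτ hp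
    rw [show m + v - p = v - (p - m) by abel, norm_sub_sq_real v (p - m)]
    linarith
  have hdist : infDist (m + v) M = ‖v‖ := by
    refine le_antisymm ?_ ((le_infDist ⟨m, hm⟩).2 fun p hp => ?_)
    · have h := infDist_le_dist_of_mem (x := m + v) hm
      rwa [dist_eq_norm, add_sub_cancel_left] at h
    · have h : ‖v‖ ^ 2 ≤ ‖m + v - p‖ ^ 2 := by
        refine le_of_mul_le_mul_left ?_ hR
        linarith [hgap p hp, mul_nonneg (sub_pos.2 hvR).le (sq_nonneg ‖p - m‖)]
      rw [dist_eq_norm]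
      exact (pow_le_pow_iff_left₀ (norm_nonneg _) (norm_nonneg _) two_ne_zero).1 h
  refine ⟨hdist, fun p hp hpv => ?_⟩
  have h := hgap p hp
  rw [hpv, hdist] at h
  have hpm : ‖p - m‖ ^ 2 ≤ 0 := nonpos_of_mul_nonpos_right (by linarith) (sub_pos.2 hvR)
  simpa [sub_eq_zero] using hpm

theorem normal_vector_unique_nearest_point {d : ℕ}
    (M : Set (EuclideanSpace ℝ (Fin d))) (hM : M.Nonempty) (hMc : IsCompact M)
    (τ : ℝ) (hτ : 0 < τ) (hreach : HasReachAtLeast M τ)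
    (m : EuclideanSpace ℝ (Fin d)) (hm : m ∈ M)
    (v : EuclideanSpace ℝ (Fin d))
    (hv : ∀ w ∈ tangentConeAt ℝ M m, (inner ℝ v w : ℝ) = 0)
    (hvτ : ‖v‖ < τ) :
    Metric.infDist (m + v) M = ‖v‖ ∧
      (∀ p ∈ M, ‖m + v - p‖ = Metric.infDist (m + v) M → p = m) :=
  normal_vector_unique_nearest_point_general M hMc τ hreach m hm v hv hvτ
end

section
/- Let E and F be real normed spaces, Ω ⊆ E open, x ∈ Ω, and let f, g : E → F be differentiable at x. Let M ⊆ F, let τ > ε > 0 with ‖f(x) − g(x)‖ ≤ ε, and let P : F → F be a map, differentiable at f(x) and at g(x), such that P∘f = f on a neighborhood of x, such that ‖DP(g(x)) − DP(f(x))‖ ≤ (2/τ + 1/(τ − ε))·‖f(x) − g(x)‖, and such that ‖DP(f(x))‖ ≤ 1. Then the composition P∘g is differentiable at x and ‖D(P∘g)(x) − Df(x)‖ ≤ ‖Dg(x) − Df(x)‖ + C·‖f(x) − g(x)‖, where C = (2/τ + 1/(τ − ε))·(‖Dg(x) − Df(x)‖ + ‖Df(x)‖). -/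
/-!
Write `A = DP(g x)`, `B = DP(f x)`. Differentiating `P ∘ f = f` near `x` gives `B ∘ Df = Df`, so
`D(P ∘ g) - Df = (A - B) ∘ Dg + B ∘ (Dg - Df)`; bound the first term by the Lipschitz estimate on
`DP` and `‖Dg‖ ≤ ‖Dg - Df‖ + ‖Df‖`, the second by `‖B‖ ≤ 1`.
-/

open ContinuousLinearMap

section

variable {𝕜 E F : Type*} [NontriviallyNormedField 𝕜]
  [NormedAddCommGroup E] [NormedSpace 𝕜 E] [NormedAddCommGroup F] [NormedSpace 𝕜 F]

theorem fderiv_comp_fderiv_eq_of_eventually_comp_eq {P : F → F} {f : E → F} {x : E}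
    (hP : DifferentiableAt 𝕜 P (f x)) (hf : DifferentiableAt 𝕜 f x)
    (hfix : ∀ᶠ y in nhds x, P (f y) = f y) :
    (fderiv 𝕜 P (f x)).comp (fderiv 𝕜 f x) = fderiv 𝕜 f x := by
  rw [← fderiv_comp x hP hf]
  exact Filter.EventuallyEq.fderiv_eq hfix

theorem norm_comp_sub_le_of_comp_eq {A B : F →L[𝕜] F} {L D : E →L[𝕜] F}
    (hBD : B.comp D = D) :
    ‖A.comp L - D‖ ≤ ‖B‖ * ‖L - D‖ + ‖A - B‖ * (‖L - D‖ + ‖D‖) := by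
  have hsplit : A.comp L - D = (A - B).comp L + B.comp (L - D) := by
    rw [sub_comp, comp_sub, hBD]
    abel
  have hL : ‖L‖ ≤ ‖L - D‖ + ‖D‖ := norm_le_norm_sub_add L D
  calc ‖A.comp L - D‖
      ≤ ‖(A - B).comp L‖ + ‖B.comp (L - D)‖ := hsplit ▸ norm_add_le _ _
    _ ≤ ‖A - B‖ * ‖L‖ + ‖B‖ * ‖L - D‖ := add_le_add (opNorm_comp_le _ _) (opNorm_comp_le _ _)
    _ ≤ ‖B‖ * ‖L - D‖ + ‖A - B‖ * (‖L - D‖ + ‖D‖) := by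
        nlinarith [norm_nonneg (A - B)]

end

theorem derivative_error_of_projected_approximation_general
    {E F : Type*} [NormedAddCommGroup E] [NormedSpace ℝ E]
    [NormedAddCommGroup F] [NormedSpace ℝ F]
    (x : E)
    (f g : E → F)
    (hf : DifferentiableAt ℝ f x) (hg : DifferentiableAt ℝ g x)
    (τ ε : ℝ)
    (P : F → F)
    (hPf : DifferentiableAt ℝ P (f x)) (hPg : DifferentiableAt ℝ P (g x))
    (hPfix : ∀ᶠ y in nhds x, P (f y) = f y)
    (hPlip : ‖fderiv ℝ P (g x) - fderiv ℝ P (f x)‖ ≤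
      (2 / τ + 1 / (τ - ε)) * ‖f x - g x‖)
    (hPnorm : ‖fderiv ℝ P (f x)‖ ≤ 1) :
    DifferentiableAt ℝ (P ∘ g) x ∧
      ‖fderiv ℝ (P ∘ g) x - fderiv ℝ f x‖ ≤
        ‖fderiv ℝ g x - fderiv ℝ f x‖ +
          ((2 / τ + 1 / (τ - ε)) * (‖fderiv ℝ g x - fderiv ℝ f x‖ + ‖fderiv ℝ f x‖)) *
            ‖f x - g x‖ := by
  refine ⟨hPg.comp x hg, ?_⟩
  have hfix := fderiv_comp_fderiv_eq_of_eventually_comp_eq hPf hf hPfix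
  have hdist := norm_nonneg (fderiv ℝ g x - fderiv ℝ f x)
  rw [fderiv_comp x hPg hg]
  calc _ ≤ _ := norm_comp_sub_le_of_comp_eq hfix
    _ ≤ 1 * ‖fderiv ℝ g x - fderiv ℝ f x‖ +
          (2 / τ + 1 / (τ - ε)) * ‖f x - g x‖ *
            (‖fderiv ℝ g x - fderiv ℝ f x‖ + ‖fderiv ℝ f x‖) := by gcongr
    _ = _ := by ring

theorem derivative_error_of_projected_approximation
    {E F : Type*} [NormedAddCommGroup E] [NormedSpace ℝ E]
    [NormedAddCommGroup F] [NormedSpace ℝ F]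
    (Ω : Set E) (hΩ : IsOpen Ω) (x : E) (hx : x ∈ Ω)
    (f g : E → F)
    (hf : DifferentiableAt ℝ f x) (hg : DifferentiableAt ℝ g x)
    (M : Set F) (τ ε : ℝ) (hε : 0 < ε) (hετ : ε < τ)
    (hfg : ‖f x - g x‖ ≤ ε)
    (P : F → F)
    (hPf : DifferentiableAt ℝ P (f x)) (hPg : DifferentiableAt ℝ P (g x))
    (hPfix : ∀ᶠ y in nhds x, P (f y) = f y)
    (hPlip : ‖fderiv ℝ P (g x) - fderiv ℝ P (f x)‖ ≤
      (2 / τ + 1 / (τ - ε)) * ‖f x - g x‖)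
    (hPnorm : ‖fderiv ℝ P (f x)‖ ≤ 1) :
    DifferentiableAt ℝ (P ∘ g) x ∧
      ‖fderiv ℝ (P ∘ g) x - fderiv ℝ f x‖ ≤
        ‖fderiv ℝ g x - fderiv ℝ f x‖ +
          ((2 / τ + 1 / (τ - ε)) * (‖fderiv ℝ g x - fderiv ℝ f x‖ + ‖fderiv ℝ f x‖)) *
            ‖f x - g x‖ :=
  derivative_error_of_projected_approximation_general x f g hf hg τ ε P hPf hPg hPfix hPlip hPnorm
end

section
/- Let M be a nonempty compact subset of the Euclidean space ℝ^d, let τ > 0 be such that M has reach at least τ, and let P : ℝ^d → ℝ^d be a map such that for every x with infDist(x, M) < τ, P(x) ∈ M and ‖x − P(x)‖ = infDist(x, M). Let m ∈ M, assume the tangent cone of M at m is (the carrier of) a linear subspace T of ℝ^d, and assume P is differentiable at m. Then the Fréchet derivative of P at m equals the orthogonal projection of ℝ^d onto T. -/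
open Filter Metric Set Topology

theorem HasFDerivAt.apply_mem_tangentConeAt {𝕜 : Type*} [NontriviallyNormedField 𝕜]
    {E F : Type*} [NormedAddCommGroup E] [NormedSpace 𝕜 E] [NormedAddCommGroup F]
    [NormedSpace 𝕜 F] {f : E → F} {f' : E →L[𝕜] F} {x : E} {s : Set F}
    (hf : HasFDerivAt f f' x) (hs : ∀ᶠ y in 𝓝 x, f y ∈ s) (v : E) :
    f' v ∈ tangentConeAt 𝕜 s (f x) := by
  have hv : v ∈ tangentConeAt 𝕜 {y | f y ∈ s} x := by
    rw [tangentConeAt_of_mem_nhds hs]; trivial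
  exact tangentConeAt_mono (image_preimage_subset f s) (hf.hasFDerivWithinAt.mapsTo_tangent_cone hv)

theorem eq_zero_of_norm_sub_le_of_mem_orthogonal {E : Type*} [NormedAddCommGroup E]
    [InnerProductSpace ℝ E] {T : Submodule ℝ E} {u b : E} (hu : u ∈ T) (hb : b ∈ Tᗮ)
    (hle : ‖b - u‖ ≤ ‖b‖) : u = 0 := by
  have hpyth : ‖b - u‖ * ‖b - u‖ = ‖b‖ * ‖b‖ + ‖u‖ * ‖u‖ :=
    norm_sub_sq_eq_norm_sq_add_norm_sq_real ((Submodule.mem_orthogonal' T b).1 hb u hu)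
  exact norm_eq_zero.1 (by nlinarith [norm_nonneg u, norm_nonneg (b - u)])

theorem Submodule.eq_starProjection_of_norm_id_sub_le_one {E : Type*} [NormedAddCommGroup E]
    [InnerProductSpace ℝ E] (T : Submodule ℝ E) [T.HasOrthogonalProjection] {L : E →L[ℝ] E}
    (hmem : ∀ v, L v ∈ T) (hfix : ∀ v ∈ T, L v = v)
    (hnorm : ‖ContinuousLinearMap.id ℝ E - L‖ ≤ 1) :
    L = T.starProjection := by
  ext v
  set p := T.starProjection v
  have hperp : L (v - p) = 0 := by
    refine eq_zero_of_norm_sub_le_of_mem_orthogonal (hmem _)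
      (T.sub_starProjection_mem_orthogonal v) ?_
    simpa using ((ContinuousLinearMap.id ℝ E - L).le_of_opNorm_le hnorm (v - p))
  rw [map_sub, hfix p (T.starProjection_apply_mem v), sub_eq_zero] at hperp
  exact hperp

theorem eventually_infDist_lt_of_mem {E : Type*} [PseudoMetricSpace E] {M : Set E} {m : E}
    {τ : ℝ} (hτ : 0 < τ) (hm : m ∈ M) : ∀ᶠ x in 𝓝 m, infDist x M < τ :=
  (continuous_infDist_pt M).continuousAt.eventually_lt continuousAt_const
    (by rwa [infDist_zero_of_mem hm])

def IsNearestPointMap {E : Type*} [NormedAddCommGroup E] (M : Set E) (τ : ℝ) (P : E → E) : Prop :=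
  ∀ x, infDist x M < τ → P x ∈ M ∧ ‖x - P x‖ = infDist x M

namespace IsNearestPointMap

variable {E : Type*} [NormedAddCommGroup E] {M : Set E} {τ : ℝ} {P : E → E} {m : E}

theorem apply_eq_self (hP : IsNearestPointMap M τ P) (hτ : 0 < τ) (hm : m ∈ M) : P m = m := by
  have h := (hP m (by rwa [infDist_zero_of_mem hm])).2
  rwa [infDist_zero_of_mem hm, norm_sub_eq_zero_iff, eq_comm] at h

theorem eventually_apply_mem (hP : IsNearestPointMap M τ P) (hτ : 0 < τ) (hm : m ∈ M) :
    ∀ᶠ x in 𝓝 m, P x ∈ M :=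
  (eventually_infDist_lt_of_mem hτ hm).mono fun x hx => (hP x hx).1

theorem eventually_norm_sub_apply_le (hP : IsNearestPointMap M τ P) (hτ : 0 < τ) (hm : m ∈ M) :
    ∀ᶠ x in 𝓝 m, ‖x - P x‖ ≤ ‖x - m‖ :=
  (eventually_infDist_lt_of_mem hτ hm).mono fun x hx =>
    (hP x hx).2.trans_le ((infDist_le_dist_of_mem hm).trans_eq (dist_eq_norm x m))

theorem norm_id_sub_fderiv_le_one [NormedSpace ℝ E] {D : E →L[ℝ] E}
    (hP : IsNearestPointMap M τ P) (hτ : 0 < τ) (hm : m ∈ M) (hD : HasFDerivAt P D m) :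
    ‖ContinuousLinearMap.id ℝ E - D‖ ≤ 1 := by
  refine ((hasFDerivAt_id m).sub hD).le_of_lip' zero_le_one ?_
  filter_upwards [hP.eventually_norm_sub_apply_le hτ hm] with x hx
  simpa [hP.apply_eq_self hτ hm] using hx

end IsNearestPointMap

theorem fderiv_projection_on_manifold_general {d : ℕ}
    (M : Set (EuclideanSpace ℝ (Fin d)))
    (τ : ℝ) (hτ : 0 < τ)
    (P : EuclideanSpace ℝ (Fin d) → EuclideanSpace ℝ (Fin d))
    (hP : ∀ x : EuclideanSpace ℝ (Fin d), Metric.infDist x M < τ →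
      P x ∈ M ∧ ‖x - P x‖ = Metric.infDist x M)
    (m : EuclideanSpace ℝ (Fin d)) (hm : m ∈ M)
    (T : Submodule ℝ (EuclideanSpace ℝ (Fin d)))
    (hT : tangentConeAt ℝ M m = (T : Set (EuclideanSpace ℝ (Fin d))))
    (hdiff : DifferentiableAt ℝ P m) :
    fderiv ℝ P m = T.subtypeL.comp (Submodule.orthogonalProjectionOnto T) := by
  have hP : IsNearestPointMap M τ P := hP
  have hD := hdiff.hasFDerivAt
  have hPm : P m = m := hP.apply_eq_self hτ hm
  refine T.eq_starProjection_of_norm_id_sub_le_one (fun v => ?_) (fun v hv => ?_)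
    (hP.norm_id_sub_fderiv_le_one hτ hm hD)
  · have h := hD.apply_mem_tangentConeAt (hP.eventually_apply_mem hτ hm) v
    rwa [hPm, hT] at h
  · have hid : HasFDerivWithinAt P (ContinuousLinearMap.id ℝ _) M m :=
      (hasFDerivWithinAt_id m M).congr (fun x hx => hP.apply_eq_self hτ hx) hPm
    exact hD.hasFDerivWithinAt.unique_on hid (by rwa [hT])

theorem fderiv_projection_on_manifold {d : ℕ}
    (M : Set (EuclideanSpace ℝ (Fin d))) (hM : M.Nonempty) (hMc : IsCompact M)
    (τ : ℝ) (hτ : 0 < τ) (hreach : HasReachAtLeast M τ)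
    (P : EuclideanSpace ℝ (Fin d) → EuclideanSpace ℝ (Fin d))
    (hP : ∀ x : EuclideanSpace ℝ (Fin d), Metric.infDist x M < τ →
      P x ∈ M ∧ ‖x - P x‖ = Metric.infDist x M)
    (m : EuclideanSpace ℝ (Fin d)) (hm : m ∈ M)
    (T : Submodule ℝ (EuclideanSpace ℝ (Fin d)))
    (hT : tangentConeAt ℝ M m = (T : Set (EuclideanSpace ℝ (Fin d))))
    (hdiff : DifferentiableAt ℝ P m) :
    fderiv ℝ P m = T.subtypeL.comp (Submodule.orthogonalProjectionOnto T) :=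
  fderiv_projection_on_manifold_general M τ hτ P hP m hm T hT hdiff
end

section
/- Let T and R be real n×n matrices, where T is an orthogonal projection matrix (T is symmetric and T² = T) and R is orthogonal (RᵀR = I). Then the commutator satisfies ‖T·R − R·T‖₂ ≤ ‖I − R‖₂, where ‖·‖₂ denotes the spectral norm (the operator norm induced by the Euclidean norm on ℝⁿ). -/
open Matrix

/-- The spectral norm of a real `n × n` matrix: the operator norm of the induced
linear map on the Euclidean space `ℝⁿ`. -/
noncomputable def specNorm {n : ℕ} (A : Matrix (Fin n) (Fin n) ℝ) : ℝ :=
  ‖Matrix.toEuclideanCLM (𝕜 := ℝ) A‖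

/-!
For an orthogonal projection `p` and any operator `q`, the commutator `c = p q - q p` satisfies
`p c = p (q - 1) (1 - p)` and `(1 - p) c = -(1 - p) (q - 1) p`. Pythagoras for the splitting
`y = p y + (1 - p) y`, applied to `y = c x` and then to `y = x`, gives
`‖c x‖² ≤ ‖q - 1‖² (‖(1 - p) x‖² + ‖p x‖²) = ‖q - 1‖² ‖x‖²`.
-/

namespace IsStarProjection

variable {𝕜 E : Type*} [RCLike 𝕜] [NormedAddCommGroup E] [InnerProductSpace 𝕜 E] [CompleteSpace E]
  {p : E →L[𝕜] E}

theorem norm_sq_eq_norm_sq_apply_add_norm_sq_one_sub_apply (hp : IsStarProjection p) (x : E) :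
    ‖x‖ ^ 2 = ‖p x‖ ^ 2 + ‖(1 - p) x‖ ^ 2 := by
  obtain ⟨K, _, rfl⟩ := isStarProjection_iff_eq_starProjection.mp hp
  rw [← K.starProjection_orthogonal']
  exact K.norm_sq_eq_add_norm_sq_starProjection x

theorem norm_apply_le (hp : IsStarProjection p) (x : E) : ‖p x‖ ≤ ‖x‖ :=
  (p.le_opNorm x).trans (mul_le_of_le_one_left (norm_nonneg x) (hp.norm_le p))

theorem norm_mul_sub_mul_le_norm_one_sub (hp : IsStarProjection p) (q : E →L[𝕜] E) :
    ‖p * q - q * p‖ ≤ ‖1 - q‖ := by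
  set c := p * q - q * p
  have hp_mul_c : p * c = p * (q - 1) * (1 - p) := by
    simp only [c, mul_sub, sub_mul, mul_one, ← mul_assoc, hp.isIdempotentElem.eq]; abel
  have hcompl_mul_c : (1 - p) * c = -((1 - p) * (q - 1) * p) := by
    simp only [c, mul_sub, sub_mul, mul_one, one_mul, ← mul_assoc, hp.isIdempotentElem.eq]; abel
  rw [norm_sub_rev 1 q]
  refine c.opNorm_le_bound (norm_nonneg _) fun x ↦ ?_
  have hsq : ‖c x‖ ^ 2 ≤ (‖q - 1‖ * ‖x‖) ^ 2 := calc
    ‖c x‖ ^ 2 = ‖p ((q - 1) ((1 - p) x))‖ ^ 2 + ‖(1 - p) ((q - 1) (p x))‖ ^ 2 := by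
      rw [hp.norm_sq_eq_norm_sq_apply_add_norm_sq_one_sub_apply (c x), ← mul_apply_eq_comp p,
        ← mul_apply_eq_comp (1 - p), hp_mul_c, hcompl_mul_c, _root_.neg_apply, norm_neg]
      simp only [mul_apply_eq_comp]
    _ ≤ (‖q - 1‖ * ‖(1 - p) x‖) ^ 2 + (‖q - 1‖ * ‖p x‖) ^ 2 := by
      gcongr
      · exact (hp.norm_apply_le _).trans ((q - 1).le_opNorm _)
      · exact (hp.one_sub.norm_apply_le _).trans ((q - 1).le_opNorm _)
    _ = (‖q - 1‖ * ‖x‖) ^ 2 := by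
      rw [mul_pow _ ‖x‖, hp.norm_sq_eq_norm_sq_apply_add_norm_sq_one_sub_apply x]; ring
  exact (pow_le_pow_iff_left₀ (norm_nonneg _) (by positivity) two_ne_zero).mp hsq

end IsStarProjection

theorem commutator_projection_rotation_bound_general {n : ℕ}
    (T R : Matrix (Fin n) (Fin n) ℝ)
    (hTsymm : Tᵀ = T) (hTproj : T * T = T) :
    specNorm (T * R - R * T) ≤ specNorm (1 - R) := by
  have hT : IsStarProjection T :=
    ⟨hTproj, by rw [IsSelfAdjoint, star_eq_conjTranspose, conjTranspose_eq_transpose_of_trivial,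
      hTsymm]⟩
  simpa only [specNorm, map_sub, map_mul, map_one] using
    (hT.map (toEuclideanCLM (𝕜 := ℝ) (n := Fin n))).norm_mul_sub_mul_le_norm_one_sub
      (toEuclideanCLM (𝕜 := ℝ) (n := Fin n) R)

theorem commutator_projection_rotation_bound {n : ℕ}
    (T R : Matrix (Fin n) (Fin n) ℝ)
    (hTsymm : Tᵀ = T) (hTproj : T * T = T)
    (hR : Rᵀ * R = 1) :
    specNorm (T * R - R * T) ≤ specNorm (1 - R) :=
  commutator_projection_rotation_bound_general T R hTsymm hTproj
end

section
/- Let r ≥ 2 be a natural number, n ≥ 1, and let f : ℝ → ℝ^d be a 1-periodic function of class C^r. Let S_n f(t) = Σ_{k=−n}^{n} c_k(f)·e^{2πikt} be the n-th Fourier partial sum of f, where c_k(f) = ∫₀¹ f(x)·e^{−2πikx} dx ∈ ℂ^d (computed componentwise). Then for every x ∈ ℝ, ‖f(x) − S_n f(x)‖₂ ≤ (√(2d)/(2π)^r)·n^{1/2 − r}·‖f^{(r)}‖, where ‖f^{(r)}‖ = (∫₀¹ ‖f^{(r)}(x)‖₂² dx)^{1/2}. -/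
/-!
For `k ≠ 0`, `r` integrations by parts turn the `k`-th Fourier coefficient of a `1`-periodic
`C^r` function `g : ℝ → ℂ` into `(2πik)⁻ʳ` times that of `g⁽ʳ⁾`. By Cauchy–Schwarz and Parseval
for `g⁽ʳ⁾`, the coefficients of `g` are absolutely summable, so its Fourier series converges to
`g` pointwise, and
`|g x - S_n g x| ≤ ∑_{|k|>n} |ĝ k| ≤ (2π)⁻ʳ (∑_{|k|>n} |k|^(-2r))^(1/2) ‖g⁽ʳ⁾‖₂`
with `∑_{|k|>n} |k|^(-2r) ≤ 2 n^(1-2r)`. Applying this to each coordinate of `f` and summing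
squares gives the estimate.
-/

open Real MeasureTheory Filter Topology

theorem Function.Periodic.deriv {F : Type*} [NormedAddCommGroup F] [NormedSpace ℝ F]
    {f : ℝ → F} {c : ℝ} (h : Function.Periodic f c) : Function.Periodic (_root_.deriv f) c :=
  fun x => by rw [← deriv_comp_add_const, show (fun y => f (y + c)) = f from funext h]

theorem AddCircle.liftIco_coe_apply_of_periodic {p a : ℝ} [hp : Fact (0 < p)] {B : Type*}
    {f : ℝ → B} (hf : Function.Periodic f p) (x : ℝ) : AddCircle.liftIco p a f x = f x := by
  have hx : (x : AddCircle p) = (toIcoMod hp.out a x : ℝ) := by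
    rw [toIcoMod, QuotientAddGroup.mk_sub, QuotientAddGroup.mk_zsmul, AddCircle.coe_period,
      smul_zero, sub_zero]
  rw [hx, AddCircle.liftIco_coe_apply (toIcoMod_mem_Ico _ _ _), toIcoMod, hf.sub_zsmul_eq]

theorem ContinuousLinearMap.iteratedDeriv_comp_left {F G : Type*} [NormedAddCommGroup F]
    [NormedSpace ℝ F] [NormedAddCommGroup G] [NormedSpace ℝ G] (L : F →L[ℝ] G) {f : ℝ → F}
    {m : ℕ} (hf : ContDiff ℝ m f) (x : ℝ) :
    iteratedDeriv m (L ∘ f) x = L (iteratedDeriv m f x) := by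
  simp only [iteratedDeriv_eq_iteratedFDeriv, L.iteratedFDeriv_comp_left hf.contDiffAt le_rfl,
    ContinuousLinearMap.compContinuousMultilinearMap_coe, Function.comp_apply]

theorem EuclideanSpace.norm_le_mul_sqrt_sum {ι 𝕜 : Type*} [Fintype ι] [RCLike 𝕜]
    (v : EuclideanSpace 𝕜 ι) {C : ℝ} (hC : 0 ≤ C) {a : ι → ℝ} (ha : ∀ i, 0 ≤ a i)
    (hv : ∀ i, ‖v i‖ ≤ C * √(a i)) : ‖v‖ ≤ C * √(∑ i, a i) := by
  rw [EuclideanSpace.norm_eq, ← sqrt_sq hC, ← sqrt_mul (sq_nonneg C), Finset.mul_sum]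
  refine sqrt_le_sqrt (Finset.sum_le_sum fun i _ => ?_)
  calc ‖v i‖ ^ 2 ≤ (C * √(a i)) ^ 2 := by gcongr; exact hv i
    _ = C ^ 2 * a i := by rw [mul_pow, sq_sqrt (ha i)]

theorem sum_inv_pow_le_of_lt {s n : ℕ} (hs : 2 ≤ s) (hn : n ≠ 0) {F : Finset ℕ}
    (hF : ∀ m ∈ F, n < m) : ∑ m ∈ F, ((m : ℝ) ^ s)⁻¹ ≤ ((n : ℝ) ^ (s - 1))⁻¹ := by
  have hsplit : ∀ x : ℝ, x ^ s = x ^ (s - 2) * x ^ 2 := fun x => by rw [← pow_add]; congr 1; omega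
  calc ∑ m ∈ F, ((m : ℝ) ^ s)⁻¹
      ≤ ∑ m ∈ F, ((n : ℝ) ^ (s - 2))⁻¹ * ((m : ℝ) ^ 2)⁻¹ := by
        refine Finset.sum_le_sum fun m hm => ?_
        rw [hsplit, mul_inv]
        have : (n : ℝ) ≤ m := by exact_mod_cast (hF m hm).le
        gcongr
    _ ≤ ((n : ℝ) ^ (s - 2))⁻¹ * ∑ m ∈ Finset.Ioc n (max n (F.sup id)), ((m : ℝ) ^ 2)⁻¹ := by
        rw [← Finset.mul_sum]
        gcongr
        exact fun m hm =>
          Finset.mem_Ioc.2 ⟨hF m hm, le_max_of_le_right (Finset.le_sup (f := id) hm)⟩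
    _ ≤ ((n : ℝ) ^ (s - 2))⁻¹ * (n : ℝ)⁻¹ := by
        gcongr
        exact (sum_Ioc_inv_sq_le_sub hn (le_max_left _ _)).trans (sub_le_self _ (by positivity))
    _ = ((n : ℝ) ^ (s - 1))⁻¹ := by
        rw [← mul_inv, ← pow_succ]; congr 2; omega

theorem sum_inv_pow_natAbs_le_of_lt {s n : ℕ} (hs : 2 ≤ s) (hn : n ≠ 0) {F : Finset ℤ}
    (hF : ∀ k ∈ F, n < k.natAbs) :
    ∑ k ∈ F, ((k.natAbs : ℝ) ^ s)⁻¹ ≤ 2 * ((n : ℝ) ^ (s - 1))⁻¹ := by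
  have half : ∀ G ⊆ F, Set.InjOn Int.natAbs G →
      ∑ k ∈ G, ((k.natAbs : ℝ) ^ s)⁻¹ ≤ ((n : ℝ) ^ (s - 1))⁻¹ := fun G hG hinj => by
    rw [← Finset.sum_image (g := Int.natAbs) (f := fun m : ℕ => ((m : ℝ) ^ s)⁻¹) hinj]
    refine sum_inv_pow_le_of_lt hs hn fun m hm => ?_
    obtain ⟨k, hk, rfl⟩ := Finset.mem_image.1 hm
    exact hF k (hG hk)
  rw [← Finset.sum_filter_add_sum_filter_not F (0 < ·), two_mul]
  gcongr <;> refine half _ (Finset.filter_subset _ _) fun k hk l hl h => ?_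
  all_goals
    rw [Finset.mem_coe, Finset.mem_filter] at hk hl
    have := hF k hk.1
    have := hF l hl.1
    omega

theorem fourierCoeffOn_zero_one_eq_integral (g : ℝ → ℂ) (k : ℤ) :
    fourierCoeffOn zero_lt_one g k =
      ∫ x in (0 : ℝ)..1, g x * Complex.exp (-2 * π * Complex.I * k * x) := by
  rw [fourierCoeffOn_eq_integral]
  simp only [fourier_coe_apply, smul_eq_mul, sub_zero, div_one, one_smul]
  refine intervalIntegral.integral_congr fun x _ => ?_
  push_cast
  ring_nf

theorem fourierCoeffOn_eq_mul_iteratedDeriv {r : ℕ} {g : ℝ → ℂ} (hg : ContDiff ℝ r g)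
    (hper : Function.Periodic g 1) {k : ℤ} (hk : k ≠ 0) :
    fourierCoeffOn zero_lt_one g k =
      (2 * π * Complex.I * k)⁻¹ ^ r * fourierCoeffOn zero_lt_one (iteratedDeriv r g) k := by
  induction r generalizing g with
  | zero => simp
  | succ r ih =>
    have hderiv : ∀ x ∈ Set.uIcc (0 : ℝ) 1, HasDerivAt g (deriv g x) x := fun x _ =>
      ((hg.differentiable (by simp)) x).hasDerivAt
    have hint : IntervalIntegrable (deriv g) volume 0 1 :=
      (hg.continuous_deriv (by simp)).intervalIntegrable 0 1
    have hg' : ContDiff ℝ r (deriv g) := hg.deriv'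
    rw [fourierCoeffOn_of_hasDerivAt zero_lt_one hk hderiv hint, ih hg' hper.deriv,
      iteratedDeriv_succ', show g 1 = g 0 by simpa using hper 0, sub_self,
      mul_zero, zero_sub]
    push_cast
    ring

theorem hasSum_sq_fourierCoeffOn_of_continuous {g : ℝ → ℂ} (hg : Continuous g) :
    HasSum (fun k => ‖fourierCoeffOn zero_lt_one g k‖ ^ 2) (∫ x in (0 : ℝ)..1, ‖g x‖ ^ 2) := by
  have hL2 : MemLp g 2 (volume.restrict (Set.Ioc 0 1)) :=
    (memLp_two_iff_integrable_sq_norm hg.aestronglyMeasurable).2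
      (hg.norm.pow 2).integrableOn_Ioc
  simpa using hasSum_sq_fourierCoeffOn zero_lt_one hL2

theorem hasSum_fourierCoeffOn_mul_exp {g : ℝ → ℂ} (hg : Continuous g)
    (hper : Function.Periodic g 1) (hsum : Summable (fourierCoeffOn zero_lt_one g)) (x : ℝ) :
    HasSum (fun k : ℤ => fourierCoeffOn zero_lt_one g k * Complex.exp (2 * π * Complex.I * k * x))
      (g x) := by
  have : Fact ((0 : ℝ) < 1) := ⟨zero_lt_one⟩
  let G : C(AddCircle (1 : ℝ), ℂ) :=
    ⟨AddCircle.liftIco 1 0 g, AddCircle.liftIco_zero_continuous (by simpa using (hper 0).symm)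
      hg.continuousOn⟩
  have hcoeff : fourierCoeff G = fourierCoeffOn zero_lt_one g := by
    ext k
    simp only [G, ContinuousMap.coe_mk, fourierCoeff_liftIco_eq, zero_add]
  have := has_pointwise_sum_fourier_series_of_summable (hcoeff ▸ hsum) x
  rw [hcoeff] at this
  simpa only [G, ContinuousMap.coe_mk, AddCircle.liftIco_coe_apply_of_periodic hper,
    fourier_coe_apply, smul_eq_mul, Complex.ofReal_one, div_one] using this

theorem sum_norm_fourierCoeffOn_le {r n : ℕ} (hr : 1 ≤ r) (hn : n ≠ 0) {g : ℝ → ℂ}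
    (hg : ContDiff ℝ r g) (hper : Function.Periodic g 1) {F : Finset ℤ}
    (hF : ∀ k ∈ F, n < k.natAbs) :
    ∑ k ∈ F, ‖fourierCoeffOn zero_lt_one g k‖ ≤
      √2 / (2 * π) ^ r * (n : ℝ) ^ ((1 : ℝ) / 2 - r) *
        √(∫ x in (0 : ℝ)..1, ‖iteratedDeriv r g x‖ ^ 2) := by
  set a : ℤ → ℝ := fun k => ‖fourierCoeffOn zero_lt_one (iteratedDeriv r g) k‖
  set w : ℤ → ℝ := fun k => ((2 * π) ^ r * (k.natAbs : ℝ) ^ r)⁻¹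
  have hcoeff : ∀ k ∈ F, ‖fourierCoeffOn zero_lt_one g k‖ = w k * a k := fun k hk => by
    have hk : k ≠ 0 := by have := hF k hk; omega
    rw [fourierCoeffOn_eq_mul_iteratedDeriv hg hper hk, norm_mul, norm_pow, norm_inv]
    simp [w, a, Nat.cast_natAbs, abs_of_pos pi_pos, mul_pow]
  have hn_pow : ((n : ℝ) ^ ((1 : ℝ) / 2 - r)) ^ 2 = ((n : ℝ) ^ (2 * r - 1))⁻¹ := by
    rw [← rpow_natCast _ 2, ← rpow_mul n.cast_nonneg, ← rpow_natCast _ (2 * r - 1),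
      ← rpow_neg n.cast_nonneg]
    congr 1
    push_cast [Nat.cast_sub (by omega : 1 ≤ 2 * r)]
    ring
  have hweight : ∑ k ∈ F, w k ^ 2 ≤ (√2 / (2 * π) ^ r * (n : ℝ) ^ ((1 : ℝ) / 2 - r)) ^ 2 :=
    calc ∑ k ∈ F, w k ^ 2 = (((2 * π) ^ r) ^ 2)⁻¹ * ∑ k ∈ F, ((k.natAbs : ℝ) ^ (2 * r))⁻¹ := by
          rw [Finset.mul_sum]
          refine Finset.sum_congr rfl fun k _ => ?_
          simp only [w]
          ring
      _ ≤ (((2 * π) ^ r) ^ 2)⁻¹ * (2 * ((n : ℝ) ^ (2 * r - 1))⁻¹) := by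
          gcongr
          exact sum_inv_pow_natAbs_le_of_lt (by omega) hn hF
      _ = (√2 / (2 * π) ^ r * (n : ℝ) ^ ((1 : ℝ) / 2 - r)) ^ 2 := by
          rw [mul_pow _ ((n : ℝ) ^ _), div_pow, sq_sqrt zero_le_two, hn_pow]
          ring
  have hparseval : ∑ k ∈ F, a k ^ 2 ≤ ∫ x in (0 : ℝ)..1, ‖iteratedDeriv r g x‖ ^ 2 :=
    sum_le_hasSum F (fun _ _ => by positivity)
      (hasSum_sq_fourierCoeffOn_of_continuous (hg.continuous_iteratedDeriv r le_rfl))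
  calc ∑ k ∈ F, ‖fourierCoeffOn zero_lt_one g k‖ = ∑ k ∈ F, w k * a k :=
        Finset.sum_congr rfl hcoeff
    _ ≤ √(∑ k ∈ F, w k ^ 2) * √(∑ k ∈ F, a k ^ 2) := Real.sum_mul_le_sqrt_mul_sqrt F w a
    _ ≤ _ := by
        gcongr
        exact (sqrt_le_sqrt hweight).trans_eq (sqrt_sq (by positivity))

theorem summable_fourierCoeffOn_of_contDiff {r : ℕ} (hr : 1 ≤ r) {g : ℝ → ℂ}
    (hg : ContDiff ℝ r g) (hper : Function.Periodic g 1) :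
    Summable (fourierCoeffOn zero_lt_one g) := by
  obtain ⟨B, hB⟩ : ∃ B, ∀ F : Finset ℤ, (∀ k ∈ F, 1 < k.natAbs) →
      ∑ k ∈ F, ‖fourierCoeffOn zero_lt_one g k‖ ≤ B :=
    ⟨_, fun F hF => sum_norm_fourierCoeffOn_le hr one_ne_zero hg hper hF⟩
  refine .of_norm <| summable_of_sum_le
    (c := ∑ k ∈ Finset.Icc (-1) 1, ‖fourierCoeffOn zero_lt_one g k‖ + B)
    (fun _ => norm_nonneg _) fun F => ?_
  rw [← Finset.sum_filter_add_sum_filter_not F (fun k => 1 < k.natAbs), add_comm]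
  gcongr
  · intro k hk
    rw [Finset.mem_filter] at hk
    rw [Finset.mem_Icc]
    omega
  · exact hB _ fun k hk => (Finset.mem_filter.1 hk).2

theorem norm_sub_fourierPartialSum_le {r n : ℕ} (hr : 1 ≤ r) (hn : n ≠ 0) {g : ℝ → ℂ}
    (hg : ContDiff ℝ r g) (hper : Function.Periodic g 1) (x : ℝ) :
    ‖g x - ∑ k ∈ Finset.Icc (-(n : ℤ)) n,
        fourierCoeffOn zero_lt_one g k * Complex.exp (2 * π * Complex.I * k * x)‖ ≤
      √2 / (2 * π) ^ r * (n : ℝ) ^ ((1 : ℝ) / 2 - r) *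
        √(∫ x in (0 : ℝ)..1, ‖iteratedDeriv r g x‖ ^ 2) := by
  set u : ℤ → ℂ := fun k =>
    fourierCoeffOn zero_lt_one g k * Complex.exp (2 * π * Complex.I * k * x)
  set s := Finset.Icc (-(n : ℤ)) n
  have hsum : HasSum u (g x) := hasSum_fourierCoeffOn_mul_exp hg.continuous hper
    (summable_fourierCoeffOn_of_contDiff hr hg hper) x
  have hexp : ∀ k : ℤ, ‖Complex.exp (2 * π * Complex.I * k * x)‖ = 1 := fun k => by
    simp [Complex.norm_exp]
  refine le_of_tendsto (((show Tendsto _ atTop _ from hsum).sub_const _).norm)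
    ((eventually_ge_atTop s).mono fun F hF => ?_)
  rw [← Finset.sum_sdiff hF, add_sub_cancel_right]
  refine (norm_sum_le _ _).trans ?_
  simp only [u, norm_mul, hexp, mul_one]
  refine sum_norm_fourierCoeffOn_le hr hn hg hper fun k hk => ?_
  have := (Finset.mem_sdiff.1 hk).2
  simp only [s, Finset.mem_Icc] at this
  omega

theorem fourier_partial_sum_error {d : ℕ} (r n : ℕ) (hr : 2 ≤ r) (hn : 1 ≤ n)
    (f : ℝ → EuclideanSpace ℝ (Fin d))
    (hper : ∀ x : ℝ, f (x + 1) = f x)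
    (hf : ContDiff ℝ r f)
    (c : ℤ → Fin d → ℂ)
    (hc : ∀ (k : ℤ) (i : Fin d),
      c k i = ∫ x in (0:ℝ)..1, (f x i : ℂ) * Complex.exp (-2 * π * Complex.I * k * x))
    (S : ℝ → EuclideanSpace ℂ (Fin d))
    (hS : ∀ (t : ℝ) (i : Fin d),
      S t i = ∑ k ∈ Finset.Icc (-(n : ℤ)) (n : ℤ),
        c k i * Complex.exp (2 * π * Complex.I * k * t)) :
    ∀ x : ℝ,
      ‖(show EuclideanSpace ℂ (Fin d) from WithLp.toLp 2 (fun i => (f x i : ℂ))) - S x‖ ≤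
        Real.sqrt (2 * d) / (2 * π) ^ r * (n : ℝ) ^ ((1 : ℝ) / 2 - r) *
          Real.sqrt (∫ x in (0:ℝ)..1, ‖iteratedDeriv r f x‖ ^ 2) := by
  intro x
  obtain rfl | hd := d.eq_zero_or_pos
  · simp [Subsingleton.elim _ (0 : EuclideanSpace ℂ (Fin 0))]
  let L : Fin d → EuclideanSpace ℝ (Fin d) →L[ℝ] ℂ := fun i =>
    Complex.ofRealCLM.comp (EuclideanSpace.proj i)
  have hg : ∀ i, ContDiff ℝ r (L i ∘ f) := fun i => (L i).contDiff.comp hf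
  have hgper : ∀ i, Function.Periodic (L i ∘ f) 1 := fun i y => by simp [hper]
  have hderiv : ∀ i t, iteratedDeriv r (L i ∘ f) t = (iteratedDeriv r f t i : ℂ) :=
    fun i t => (L i).iteratedDeriv_comp_left hf t
  have hnorm : ∫ t in (0 : ℝ)..1, ‖iteratedDeriv r f t‖ ^ 2 =
      ∑ i, ∫ t in (0 : ℝ)..1, ‖iteratedDeriv r (L i ∘ f) t‖ ^ 2 := by
    rw [← intervalIntegral.integral_finsetSum]
    · simp [hderiv, EuclideanSpace.norm_sq_eq]
    · exact fun i _ =>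
        (((hg i).continuous_iteratedDeriv r le_rfl).norm.pow 2).intervalIntegrable 0 1
  calc _ ≤ √2 / (2 * π) ^ r * (n : ℝ) ^ ((1 : ℝ) / 2 - r) *
        √(∑ i, ∫ t in (0 : ℝ)..1, ‖iteratedDeriv r (L i ∘ f) t‖ ^ 2) := by
        refine EuclideanSpace.norm_le_mul_sqrt_sum _ (by positivity)
          (fun i => intervalIntegral.integral_nonneg zero_le_one fun _ _ => by positivity)
          fun i => ?_
        simpa [hS, hc, fourierCoeffOn_zero_one_eq_integral, L] using
          norm_sub_fourierPartialSum_le (by omega) (Nat.one_le_iff_ne_zero.mp hn) (hg i) (hgper i) x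
    _ ≤ _ := by
        rw [← hnorm]
        gcongr
        have : (1 : ℝ) ≤ d := by exact_mod_cast hd
        linarith
end

section
/- Let τ > 0, t ≥ 0 with t/τ ≤ π, and let X : ℝ → ℝ^d be a differentiable curve such that ‖X(s)‖ = 1 and ‖X′(s)‖ ≤ 1/τ for all s ∈ [0, t]. Then ⟨X(0), X(t)⟩ ≥ cos(t/τ); equivalently, the angle between X(0) and X(t) is at most t/τ. -/
/-!
The angle `θ(s) = ∠(X 0, X s)` grows no faster than the speed of `X`: by the triangle inequality
for angles, `θ(z) - θ(x) ≤ ∠(X x, X z)`, and on the unit sphere the angle between nearby points is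
the chord length up to a factor tending to `1`, while the chord over `[x, z]` is
`‖X' x‖ (z - x) + o(z - x)`. A fencing argument turns this right-derivative bound into
`θ(t) ≤ t / τ ≤ π`, and `⟨X 0, X t⟩ = cos θ(t)` since `cos` is antitone on `[0, π]`.
-/

open Real Set Filter Topology InnerProductGeometry

section
variable {V : Type*} [NormedAddCommGroup V] [InnerProductSpace ℝ V]

theorem norm_sub_eq_two_mul_sin_angle_div_two {u v : V} (hu : ‖u‖ = 1) (hv : ‖v‖ = 1) :
    ‖u - v‖ = 2 * sin (angle u v / 2) := by
  have hsin : 0 ≤ sin (angle u v / 2) :=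
    sin_nonneg_of_nonneg_of_le_pi (by linarith [angle_nonneg u v])
      (by linarith [angle_le_pi u v, pi_pos])
  have hcos : cos (angle u v) = 1 - 2 * sin (angle u v / 2) ^ 2 := by
    have hdouble := cos_two_mul (angle u v / 2)
    rw [mul_div_cancel₀ _ two_ne_zero] at hdouble
    linear_combination hdouble + 2 * cos_sq_add_sin_sq (angle u v / 2)
  have hlaw := norm_sub_sq_eq_norm_sq_add_norm_sq_sub_two_mul_norm_mul_norm_mul_cos_angle u v
  rw [hu, hv, hcos] at hlaw
  rw [← sq_eq_sq₀ (norm_nonneg _) (by positivity)]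
  linear_combination hlaw

theorem angle_sub_angle_pow_three_div_le_norm_sub {u v : V} (hu : ‖u‖ = 1) (hv : ‖v‖ = 1) :
    angle u v - angle u v ^ 3 / 24 ≤ ‖u - v‖ := by
  rw [norm_sub_eq_two_mul_sin_angle_div_two hu hv]
  linarith [sin_ge_sub_cube (x := angle u v / 2) (by linarith [angle_nonneg u v])]

theorem tendsto_norm_sub_div_nhdsGT {Y : ℝ → V} {Y' : V} {x : ℝ}
    (hY : HasDerivWithinAt Y Y' (Ici x) x) :
    Tendsto (fun z => ‖Y z - Y x‖ / (z - x)) (𝓝[>] x) (𝓝 ‖Y'‖) := by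
  have hslope := ((hasDerivWithinAt_iff_tendsto_slope' (lt_irrefl x)).1 hY.Ioi_of_Ici).norm
  refine hslope.congr' (eventually_nhdsWithin_of_forall fun z (hz : x < z) => ?_)
  rw [slope_def_module, norm_smul, norm_inv, Real.norm_eq_abs, abs_of_pos (sub_pos.2 hz),
    inv_mul_eq_div]

theorem eventually_angle_lt_mul_sub {Y : ℝ → V} {Y' : V} {x r : ℝ}
    (hY : HasDerivWithinAt Y Y' (Ici x) x) (hx : ‖Y x‖ = 1) (hunit : ∀ᶠ z in 𝓝[>] x, ‖Y z‖ = 1)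
    (hr : ‖Y'‖ < r) : ∀ᶠ z in 𝓝[>] x, angle (Y x) (Y z) < r * (z - x) := by
  have hYx : Y x ≠ 0 := norm_ne_zero_iff.1 (by rw [hx]; exact one_ne_zero)
  have hangle : Tendsto (fun z => angle (Y x) (Y z)) (𝓝[>] x) (𝓝 0) := by
    have hcont : ContinuousAt (fun p : V × V => angle p.1 p.2) (Y x, Y x) :=
      continuousAt_angle hYx hYx
    have hYz : Tendsto Y (𝓝[>] x) (𝓝 (Y x)) :=
      (hY.continuousWithinAt.mono Ioi_subset_Ici_self).tendsto
    have := hcont.tendsto.comp (tendsto_const_nhds.prodMk_nhds hYz)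
    rwa [angle_self hYx] at this
  have hfactor : Tendsto (fun z => 1 - angle (Y x) (Y z) ^ 2 / 24) (𝓝[>] x) (𝓝 1) := by
    simpa using (hangle.pow 2).div_const 24 |>.const_sub 1
  have hquot := (tendsto_norm_sub_div_nhdsGT hY).div hfactor one_ne_zero
  rw [div_one] at hquot
  filter_upwards [hquot.eventually (gt_mem_nhds hr), hfactor.eventually (lt_mem_nhds one_pos),
    hunit, self_mem_nhdsWithin] with z hlt hpos hz (hxz : x < z)
  set θ := angle (Y x) (Y z)
  have hchord : θ * (1 - θ ^ 2 / 24) ≤ ‖Y z - Y x‖ := by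
    rw [norm_sub_rev]
    linarith [angle_sub_angle_pow_three_div_le_norm_sub hx hz]
  calc θ ≤ ‖Y z - Y x‖ / (1 - θ ^ 2 / 24) := (le_div_iff₀ hpos).2 hchord
    _ = ‖Y z - Y x‖ / (z - x) / (1 - θ ^ 2 / 24) * (z - x) := by
      field_simp [(sub_pos.2 hxz).ne']
    _ < r * (z - x) := mul_lt_mul_of_pos_right hlt (sub_pos.2 hxz)

theorem angle_le_mul_sub_of_norm_deriv_le {Y Y' : ℝ → V} {a b K : ℝ}
    (hY : ContinuousOn Y (Icc a b)) (hderiv : ∀ s ∈ Ico a b, HasDerivWithinAt Y (Y' s) (Ici s) s)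
    (hbound : ∀ s ∈ Ico a b, ‖Y' s‖ ≤ K) (hunit : ∀ s ∈ Icc a b, ‖Y s‖ = 1) :
    ∀ s ∈ Icc a b, angle (Y a) (Y s) ≤ K * (s - a) := by
  intro s hs
  have hne : ∀ z ∈ Icc a b, Y z ≠ 0 := fun z hz =>
    norm_ne_zero_iff.1 (by rw [hunit z hz]; exact one_ne_zero)
  have ha : a ∈ Icc a b := left_mem_Icc.2 (hs.1.trans hs.2)
  refine image_le_of_liminf_slope_right_le_deriv_boundary (f := fun z => angle (Y a) (Y z))
    (B := fun z => K * (z - a)) (B' := fun _ => K) ?_ ?_ ?_ ?_ ?_ hs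
  · intro x hx
    exact (continuousAt_angle (x := (Y a, Y x)) (hne a ha) (hne x hx)).comp_continuousWithinAt
      (f := fun z => (Y a, Y z)) (continuousWithinAt_const.prodMk (hY x hx))
  · rw [angle_self (hne a ha), sub_self, mul_zero]
  · fun_prop
  · intro x _
    simpa using ((hasDerivWithinAt_id x (Ici x)).sub_const a).const_mul K
  · intro x hx r hr
    have hunit_right : ∀ᶠ z in 𝓝[>] x, ‖Y z‖ = 1 :=
      eventually_of_mem (Ioo_mem_nhdsGT hx.2) fun z hz => hunit z ⟨hx.1.trans hz.1.le, hz.2.le⟩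
    refine Eventually.frequently ?_
    filter_upwards [eventually_angle_lt_mul_sub (hderiv x hx) (hunit x (Ico_subset_Icc_self hx))
      hunit_right ((hbound x hx).trans_lt hr), self_mem_nhdsWithin] with z hlt (hxz : x < z)
    rw [slope_def_field, div_lt_iff₀ (sub_pos.2 hxz)]
    linarith [angle_le_angle_add_angle (Y a) (Y x) (Y z)]

end

theorem angle_bound_of_slow_curve_general {d : ℕ}
    (τ t : ℝ) (ht : 0 ≤ t) (htτ : t / τ ≤ π)
    (X : ℝ → EuclideanSpace ℝ (Fin d)) (hX : Differentiable ℝ X)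
    (hXnorm : ∀ s ∈ Set.Icc (0 : ℝ) t, ‖X s‖ = 1)
    (hXder : ∀ s ∈ Set.Icc (0 : ℝ) t, ‖deriv X s‖ ≤ 1 / τ) :
    Real.cos (t / τ) ≤ (inner ℝ (X 0) (X t) : ℝ) := by
  have hangle : angle (X 0) (X t) ≤ t / τ := by
    have := angle_le_mul_sub_of_norm_deriv_le hX.continuous.continuousOn
      (fun s _ => (hX s).hasDerivAt.hasDerivWithinAt)
      (fun s hs => hXder s (Ico_subset_Icc_self hs)) hXnorm t (right_mem_Icc.2 ht)
    rwa [sub_zero, one_div_mul_eq_div] at this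
  rw [inner_eq_cos_angle_of_norm_eq_one (hXnorm 0 (left_mem_Icc.2 ht))
    (hXnorm t (right_mem_Icc.2 ht))]
  exact cos_le_cos_of_nonneg_of_le_pi (angle_nonneg _ _) htτ hangle

theorem angle_bound_of_slow_curve {d : ℕ}
    (τ t : ℝ) (hτ : 0 < τ) (ht : 0 ≤ t) (htτ : t / τ ≤ π)
    (X : ℝ → EuclideanSpace ℝ (Fin d)) (hX : Differentiable ℝ X)
    (hXnorm : ∀ s ∈ Set.Icc (0 : ℝ) t, ‖X s‖ = 1)
    (hXder : ∀ s ∈ Set.Icc (0 : ℝ) t, ‖deriv X s‖ ≤ 1 / τ) :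
    Real.cos (t / τ) ≤ (inner ℝ (X 0) (X t) : ℝ) :=
  angle_bound_of_slow_curve_general τ t ht htτ X hX hXnorm hXder
end

section
/- Let τ > 0, t ≥ 0, and let γ : ℝ → ℝ^d be a differentiable curve such that ⟨γ′(ξ), γ′(η)⟩ ≥ cos((ξ − η)/τ) for all ξ, η ∈ [0, t]. Then τ²·(2 − 2·cos(t/τ)) ≤ ‖γ(t) − γ(0)‖². (This uses the identity ∫₀ᵗ∫₀ᵗ cos((ξ−η)/τ) dη dξ = τ²(2 − 2cos(t/τ)) together with ∫₀ᵗ∫₀ᵗ ⟨γ′(ξ), γ′(η)⟩ dη dξ = ‖γ(t) − γ(0)‖².) -/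
open Real MeasureTheory

/-!
By the fundamental theorem of calculus `γ t - γ 0 = ∫₀ᵗ γ'`, so `‖γ t - γ 0‖²` is the double
integral of `⟪γ' ξ, γ' η⟫` over `[0, t]²`, which dominates the double integral of
`cos ((ξ - η) / τ)`. The latter is the same double integral for the circle of radius `τ`
traversed at unit speed (velocity `exp (i ξ / τ)` in `ℂ`), hence equals the square of that
circle's chord, `τ² (2 - 2 cos (t / τ))`.
-/

namespace intervalIntegral

variable {E : Type*} [NormedAddCommGroup E] [InnerProductSpace ℝ E] [CompleteSpace E]
  {f : ℝ → E} {a b : ℝ} {μ : Measure ℝ}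

theorem integral_inner (hf : IntervalIntegrable f μ a b) (v : E) :
    ∫ y in a..b, inner ℝ v (f y) ∂μ = inner ℝ v (∫ y in a..b, f y ∂μ) :=
  (innerSL ℝ v).intervalIntegral_comp_comm hf

theorem norm_integral_sq_eq_integral_integral_inner (hf : IntervalIntegrable f μ a b) :
    ‖∫ x in a..b, f x ∂μ‖ ^ 2 = ∫ x in a..b, ∫ y in a..b, inner ℝ (f x) (f y) ∂μ ∂μ := by
  simp_rw [intervalIntegral.integral_inner hf, ← real_inner_self_eq_norm_sq]
  conv_rhs => enter [1, x]; rw [real_inner_comm]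
  exact (intervalIntegral.integral_inner hf _).symm

theorem integral_integral_le_norm_integral_sq [IsLocallyFiniteMeasure μ] [NullSingletonClass μ]
    (hab : a ≤ b) (hf : IntervalIntegrable f μ a b) {K : ℝ → ℝ → ℝ}
    (hK : Continuous (Function.uncurry K))
    (hKf : ∀ x ∈ Set.Icc a b, ∀ y ∈ Set.Icc a b, K x y ≤ inner ℝ (f x) (f y)) :
    ∫ x in a..b, ∫ y in a..b, K x y ∂μ ∂μ ≤ ‖∫ x in a..b, f x ∂μ‖ ^ 2 := by
  have inner_integrable (v : E) : IntervalIntegrable (fun y ↦ inner ℝ v (f y)) μ a b :=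
    ⟨hf.1.const_inner v, hf.2.const_inner v⟩
  rw [norm_integral_sq_eq_integral_integral_inner hf]
  refine integral_mono_on hab ?_ ?_ fun x hx ↦ ?_
  · exact (continuous_parametric_intervalIntegral_of_continuous' hK a b).intervalIntegrable a b
  · convert inner_integrable (∫ y in a..b, f y ∂μ) using 2 with x
    rw [intervalIntegral.integral_inner hf, real_inner_comm]
  · exact integral_mono_on hab ((hK.uncurry_left x).intervalIntegrable a b)
      (inner_integrable (f x)) (hKf x hx)

end intervalIntegral

namespace Complex

theorem inner_exp_ofReal_mul_I (θ φ : ℝ) :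
    inner ℝ (exp (θ * I)) (exp (φ * I)) = Real.cos (θ - φ) := by
  simp only [Complex.inner, mul_re, conj_re, conj_im, exp_ofReal_mul_I_re, exp_ofReal_mul_I_im,
    Real.cos_sub]
  ring

theorem norm_exp_ofReal_mul_I_sub_one_sq (θ : ℝ) :
    ‖exp (θ * I) - 1‖ ^ 2 = 2 - 2 * Real.cos θ := by
  rw [Complex.sq_norm, normSq_apply]
  simp only [sub_re, sub_im, one_re, one_im, exp_ofReal_mul_I_re, exp_ofReal_mul_I_im]
  nlinarith [Real.sin_sq_add_cos_sq θ]

end Complex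

theorem integral_integral_cos_sub_div {τ : ℝ} (hτ : τ ≠ 0) (t : ℝ) :
    ∫ ξ in (0 : ℝ)..t, ∫ η in (0 : ℝ)..t, cos ((ξ - η) / τ) = τ ^ 2 * (2 - 2 * cos (t / τ)) := by
  have hphase (x : ℝ) : ((x / τ : ℝ) : ℂ) * Complex.I = Complex.I / τ * x := by push_cast; ring
  have hchord : ∫ ξ in (0 : ℝ)..t, Complex.exp ((ξ / τ : ℝ) * Complex.I)
      = (Complex.exp ((t / τ : ℝ) * Complex.I) - 1) / (Complex.I / τ) := by
    have hc : Complex.I / τ ≠ 0 := by simpa using hτ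
    simp_rw [hphase, integral_exp_mul_complex hc]
    simp
  have key := intervalIntegral.norm_integral_sq_eq_integral_integral_inner (μ := volume)
    (a := 0) (b := t) (f := fun ξ ↦ Complex.exp ((ξ / τ : ℝ) * Complex.I))
    (Continuous.intervalIntegrable (by fun_prop) _ _)
  simp_rw [Complex.inner_exp_ofReal_mul_I, ← sub_div, hchord, norm_div, div_pow,
    Complex.norm_exp_ofReal_mul_I_sub_one_sq] at key
  rw [← key]
  simp only [Complex.norm_I, one_pow, Complex.norm_real, norm_eq_abs, sq_abs, one_div,
    div_inv_eq_mul]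
  ring

theorem chord_length_lower_bound {d : ℕ}
    (τ t : ℝ) (hτ : 0 < τ) (ht : 0 ≤ t)
    (γ : ℝ → EuclideanSpace ℝ (Fin d)) (hγ : Differentiable ℝ γ)
    (hint : IntervalIntegrable (deriv γ) volume 0 t)
    (hcos : ∀ ξ ∈ Set.Icc (0 : ℝ) t, ∀ η ∈ Set.Icc (0 : ℝ) t,
      Real.cos ((ξ - η) / τ) ≤ (inner ℝ (deriv γ ξ) (deriv γ η) : ℝ)) :
    τ ^ 2 * (2 - 2 * Real.cos (t / τ)) ≤ ‖γ t - γ 0‖ ^ 2 := by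
  rw [← intervalIntegral.integral_deriv_eq_sub (fun x _ ↦ hγ x) hint,
    ← integral_integral_cos_sub_div hτ.ne' t]
  exact intervalIntegral.integral_integral_le_norm_integral_sq ht hint (by fun_prop) hcos
end

section
/- Let x, y ∈ ℝ³ be unit vectors with xxᵀ ≠ yyᵀ, and let T_y = {vyᵀ + yvᵀ : v ∈ ℝ³, ⟨v, y⟩ = 0} be the tangent space at yyᵀ of the image of the embedding z ↦ zzᵀ of the projective plane into the 3×3 real matrices. Then, with respect to the Frobenius norm, ‖xxᵀ − yyᵀ‖² = √2 · dist(xxᵀ − yyᵀ, T_y); in particular the quotient ‖xxᵀ − yyᵀ‖²/(2·dist(xxᵀ − yyᵀ, T_y)) is constantly equal to 1/√2. -/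
attribute [local instance] Matrix.frobeniusSeminormedAddCommGroup
  Matrix.frobeniusNormedAddCommGroup

/-- The rank one matrix `x xᵀ` associated with a vector `x ∈ ℝ³`. -/
def outerMat (x : EuclideanSpace ℝ (Fin 3)) : Matrix (Fin 3) (Fin 3) ℝ :=
  Matrix.of fun i j => x i * x j

/-- The tangent space at `y yᵀ` of the image of the embedding `z ↦ z zᵀ` of the
projective plane: all matrices `v yᵀ + y vᵀ` with `v ⊥ y`. -/
def tangentSetRP2 (y : EuclideanSpace ℝ (Fin 3)) : Set (Matrix (Fin 3) (Fin 3) ℝ) :=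
  {B | ∃ v : EuclideanSpace ℝ (Fin 3), (inner ℝ v y : ℝ) = 0 ∧
    B = Matrix.of fun i j => v i * y j + y i * v j}

/-!
Put `c = ⟪x, y⟫` and `u = x - c y`, so that `u ⊥ y` and `‖u‖² = 1 - c²`. Expanding,
`x xᵀ - y yᵀ = P + (w yᵀ + y wᵀ)` with `P = u uᵀ - (1 - c²) y yᵀ` and `w = c u ⊥ y`. The second
summand lies in `T_y`, and `P` is Frobenius-orthogonal to `T_y`: `⟪P, v yᵀ + y vᵀ⟫ = 2 ⟪P y, v⟫` and
`P y = -(1 - c²) y ⊥ v`. By Pythagoras the distance to `T_y` is `‖P‖ = √2 (1 - c²)`, while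
`‖x xᵀ - y yᵀ‖² = 2 (1 - c²)`.
-/

open Matrix RealInnerProductSpace

namespace Matrix

variable {m n : Type*} [Fintype m] [Fintype n]

theorem frobenius_norm_sq_eq_trace (A : Matrix m n ℝ) : ‖A‖ ^ 2 = trace (Aᵀ * A) := by
  change ‖WithLp.toLp 2 fun i => WithLp.toLp 2 (A i)‖ ^ 2 = _
  simp only [PiLp.norm_sq_eq_of_L2, Real.norm_eq_abs, sq_abs, trace, diag_apply, mul_apply,
    transpose_apply]
  rw [Finset.sum_comm]
  simp only [sq]

theorem frobenius_norm_add_sq (A B : Matrix m n ℝ) :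
    ‖A + B‖ ^ 2 = ‖A‖ ^ 2 + 2 * trace (Aᵀ * B) + ‖B‖ ^ 2 := by
  have hBA : trace (Bᵀ * A) = trace (Aᵀ * B) := by
    rw [← trace_transpose, transpose_mul, transpose_transpose]
  simp only [frobenius_norm_sq_eq_trace, transpose_add, Matrix.add_mul, Matrix.mul_add, trace_add,
    hBA]
  ring

theorem infDist_eq_frobenius_norm_sub {S : Set (Matrix m n ℝ)} {A B₀ : Matrix m n ℝ}
    (hB₀ : B₀ ∈ S) (horth : ∀ B ∈ S, trace ((A - B₀)ᵀ * (B₀ - B)) = 0) :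
    Metric.infDist A S = ‖A - B₀‖ := by
  refine le_antisymm ?_ ((Metric.le_infDist ⟨B₀, hB₀⟩).2 fun B hB => ?_)
  · simpa only [dist_eq_norm] using Metric.infDist_le_dist_of_mem hB₀
  · have hpyth := frobenius_norm_add_sq (A - B₀) (B₀ - B)
    rw [horth B hB, sub_add_sub_cancel] at hpyth
    rw [dist_eq_norm, ← sq_le_sq₀ (norm_nonneg _) (norm_nonneg _), hpyth]
    nlinarith [sq_nonneg ‖B₀ - B‖]

theorem trace_transpose_vecMulVec_mul_vecMulVec (a c : EuclideanSpace ℝ m)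
    (b d : EuclideanSpace ℝ n) :
    trace ((vecMulVec a b)ᵀ * vecMulVec c d) = ⟪a, c⟫ * ⟪b, d⟫ := by
  rw [transpose_vecMulVec, vecMulVec_mul_vecMulVec, trace_vecMulVec, dotProduct_smul, smul_eq_mul,
    EuclideanSpace.inner_eq_star_dotProduct, EuclideanSpace.inner_eq_star_dotProduct]
  simp only [star_trivial, dotProduct_comm]

end Matrix

section TangentProjection

variable {n : Type*} [Fintype n] {x y : EuclideanSpace ℝ n}

noncomputable def symmOuter (v y : EuclideanSpace ℝ n) : Matrix n n ℝ :=
  vecMulVec v y + vecMulVec y v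

-- `w = (1 - y yᵀ) (x xᵀ - y yᵀ) y`, so that `symmOuter w y` is the orthogonal projection of
-- `x xᵀ - y yᵀ` onto the tangent space at `y yᵀ`.
noncomputable def tangentFoot (x y : EuclideanSpace ℝ n) : EuclideanSpace ℝ n :=
  ⟪x, y⟫ • x - ⟪x, y⟫ ^ 2 • y

theorem inner_tangentFoot_left (hy : ‖y‖ = 1) : ⟪tangentFoot x y, y⟫ = 0 := by
  simp only [tangentFoot, inner_sub_left, real_inner_smul_left, real_inner_self_eq_norm_sq, hy]
  ring

theorem frobenius_norm_vecMulVec_sub_vecMulVec_sq (hx : ‖x‖ = 1) (hy : ‖y‖ = 1) :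
    ‖vecMulVec x x - vecMulVec y y‖ ^ 2 = 2 * (1 - ⟪x, y⟫ ^ 2) := by
  simp only [frobenius_norm_sq_eq_trace, transpose_sub, Matrix.sub_mul, Matrix.mul_sub, trace_sub,
    trace_transpose_vecMulVec_mul_vecMulVec, real_inner_self_eq_norm_sq, hx, hy,
    real_inner_comm x y]
  ring

theorem trace_transpose_sub_symmOuter_tangentFoot_mul_eq_zero (hy : ‖y‖ = 1)
    {v : EuclideanSpace ℝ n} (hv : ⟪v, y⟫ = 0) :
    trace ((vecMulVec x x - vecMulVec y y - symmOuter (tangentFoot x y) y)ᵀ *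
      (symmOuter (tangentFoot x y) y - symmOuter v y)) = 0 := by
  simp only [symmOuter, tangentFoot, transpose_sub, transpose_add, Matrix.sub_mul, Matrix.add_mul,
    Matrix.mul_add, Matrix.mul_sub, trace_sub, trace_add, trace_transpose_vecMulVec_mul_vecMulVec,
    inner_sub_left, inner_sub_right, real_inner_smul_left, real_inner_smul_right,
    real_inner_self_eq_norm_sq, norm_smul, mul_pow, Real.norm_eq_abs, sq_abs, hy,
    real_inner_comm v y, hv, real_inner_comm x y]
  ring

theorem frobenius_norm_sub_symmOuter_tangentFoot (hx : ‖x‖ = 1) (hy : ‖y‖ = 1) :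
    ‖vecMulVec x x - vecMulVec y y - symmOuter (tangentFoot x y) y‖ =
      √2 * (1 - ⟪x, y⟫ ^ 2) := by
  have hsq : ‖vecMulVec x x - vecMulVec y y - symmOuter (tangentFoot x y) y‖ ^ 2 =
      (√2 * (1 - ⟪x, y⟫ ^ 2)) ^ 2 := by
    simp only [symmOuter, tangentFoot, frobenius_norm_sq_eq_trace, transpose_sub, transpose_add,
      Matrix.sub_mul, Matrix.add_mul, Matrix.mul_add, Matrix.mul_sub, trace_sub, trace_add,
      trace_transpose_vecMulVec_mul_vecMulVec, inner_sub_left, inner_sub_right,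
      real_inner_smul_left, real_inner_smul_right, real_inner_self_eq_norm_sq, norm_smul, mul_pow,
      Real.norm_eq_abs, sq_abs, hx, hy, real_inner_comm x y, Real.sq_sqrt zero_le_two]
    ring
  have hc : |⟪x, y⟫| ≤ 1 := by simpa [hx, hy] using abs_real_inner_le_norm x y
  have hc' : 0 ≤ 1 - ⟪x, y⟫ ^ 2 := sub_nonneg.2 ((sq_le_one_iff_abs_le_one _).2 hc)
  exact (sq_eq_sq₀ (norm_nonneg _) (by positivity)).1 hsq

theorem infDist_vecMulVec_sub_vecMulVec_tangentSpace (hx : ‖x‖ = 1) (hy : ‖y‖ = 1) :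
    Metric.infDist (vecMulVec x x - vecMulVec y y) {B | ∃ v, ⟪v, y⟫ = 0 ∧ B = symmOuter v y} =
      √2 * (1 - ⟪x, y⟫ ^ 2) := by
  have hfoot : symmOuter (tangentFoot x y) y ∈ {B | ∃ v, ⟪v, y⟫ = 0 ∧ B = symmOuter v y} :=
    ⟨_, inner_tangentFoot_left hy, rfl⟩
  rw [infDist_eq_frobenius_norm_sub hfoot fun _ ⟨_, hv, hB⟩ =>
      hB ▸ trace_transpose_sub_symmOuter_tangentFoot_mul_eq_zero hy hv,
    frobenius_norm_sub_symmOuter_tangentFoot hx hy]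

end TangentProjection

theorem rp2_embedding_distance_to_tangent_general
    (x y : EuclideanSpace ℝ (Fin 3)) (hx : ‖x‖ = 1) (hy : ‖y‖ = 1) :
    ‖outerMat x - outerMat y‖ ^ 2 =
      Real.sqrt 2 * Metric.infDist (outerMat x - outerMat y) (tangentSetRP2 y) := by
  have hnorm : ‖outerMat x - outerMat y‖ ^ 2 = 2 * (1 - ⟪x, y⟫ ^ 2) :=
    frobenius_norm_vecMulVec_sub_vecMulVec_sq hx hy
  have hdist : Metric.infDist (outerMat x - outerMat y) (tangentSetRP2 y) =
      √2 * (1 - ⟪x, y⟫ ^ 2) :=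
    infDist_vecMulVec_sub_vecMulVec_tangentSpace hx hy
  rw [hnorm, hdist, ← mul_assoc, Real.mul_self_sqrt zero_le_two]

theorem rp2_embedding_distance_to_tangent
    (x y : EuclideanSpace ℝ (Fin 3)) (hx : ‖x‖ = 1) (hy : ‖y‖ = 1)
    (hxy : outerMat x ≠ outerMat y) :
    ‖outerMat x - outerMat y‖ ^ 2 =
      Real.sqrt 2 * Metric.infDist (outerMat x - outerMat y) (tangentSetRP2 y) :=
  rp2_embedding_distance_to_tangent_general x y hx hy
end

section
/- Let E = {xxᵀ : x ∈ ℝ³, ‖x‖ = 1} be the image of the real projective plane ℝP² under the embedding x ↦ xxᵀ, viewed as a subset of the 3×3 real matrices with the Frobenius norm. Then the reach of E equals 1/√2; that is, 1/√2 = sup{ t ≥ 0 : every matrix A with dist(A, E) < t has a unique nearest point in E }. -/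
attribute [local instance] Matrix.frobeniusSeminormedAddCommGroup
  Matrix.frobeniusNormedAddCommGroup

/-- The image of the real projective plane `ℝP²` under the embedding `x ↦ x xᵀ`,
viewed as a subset of the `3 × 3` real matrices (with the Frobenius norm). -/
def RP2Embedded : Set (Matrix (Fin 3) (Fin 3) ℝ) :=
  {A | ∃ x : EuclideanSpace ℝ (Fin 3), ‖x‖ = 1 ∧ A = Matrix.of fun i j => x i * x j}

/-!
For a unit vector `x`, `‖A - x xᵀ‖² = ‖A‖² - 2 xᵀAx + 1`, so the nearest points of `A` on the
Veronese image `E` are the `x xᵀ` with `x` maximizing the quadratic form of `A` on the unit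
sphere, and such maximizers are eigenvectors of `A + Aᵀ` for `2M`, where `M` is the maximum. Two
different nearest points make this eigenspace at least two-dimensional, whence
`‖A‖² ≥ ‖A + Aᵀ‖² / 4 ≥ 2M²` and `dist(A, E)² = ‖A‖² - 2M + 1 ≥ 2M² - 2M + 1 ≥ 1/2`.
Conversely, the midpoint of `e₁e₁ᵀ` and `e₂e₂ᵀ` is at distance `1/√2` from `E` and has both of
them as nearest points.
-/

attribute [local instance] Matrix.frobeniusNormSMulClass

open Matrix Metric

noncomputable def reach {X : Type*} [SeminormedAddCommGroup X] (E : Set X) : ℝ :=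
  sSup {t : ℝ | 0 ≤ t ∧ ∀ a, infDist a E < t → ∃! p, p ∈ E ∧ ‖a - p‖ = infDist a E}

theorem reach_eq_of_existsUnique_of_not_existsUnique {X : Type*} [SeminormedAddCommGroup X]
    {E : Set X} {r : ℝ} (hr : 0 ≤ r)
    (hunique : ∀ a, infDist a E < r → ∃! p, p ∈ E ∧ ‖a - p‖ = infDist a E)
    {a₀ : X} (ha₀ : infDist a₀ E = r) (hnot : ¬ ∃! p, p ∈ E ∧ ‖a₀ - p‖ = infDist a₀ E) :
    reach E = r :=
  IsGreatest.csSup_eq ⟨⟨hr, hunique⟩, fun _ ⟨_, ht⟩ =>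
    le_of_not_gt fun hlt => hnot (ht a₀ (ha₀ ▸ hlt))⟩

variable {m n : Type*} [Fintype m] [Fintype n]

theorem frobenius_norm_sq_eq_sum (A : Matrix m n ℝ) : ‖A‖ ^ 2 = ∑ i, ∑ j, A i j ^ 2 := by
  rw [frobenius_norm_def, ← Real.sqrt_eq_rpow, Real.sq_sqrt (by positivity)]
  simp_rw [Real.rpow_two, Real.norm_eq_abs, sq_abs]

theorem norm_sub_vecMulVec_self_sq (A : Matrix n n ℝ) {x : n → ℝ} (hx : x ⬝ᵥ x = 1) :
    ‖A - vecMulVec x x‖ ^ 2 = ‖A‖ ^ 2 - 2 * (x ⬝ᵥ A *ᵥ x) + 1 := by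
  have hxx : ∑ i, ∑ j, (x i * x j) ^ 2 = 1 := by
    have hx2 : ∑ i, x i ^ 2 = 1 := by simpa only [dotProduct, sq] using hx
    simp_rw [mul_pow, ← Finset.mul_sum, ← Finset.sum_mul, hx2, one_mul]
  have hAx : x ⬝ᵥ A *ᵥ x = ∑ i, ∑ j, A i j * (x i * x j) := by
    simp only [dotProduct, mulVec, Finset.mul_sum]
    exact Finset.sum_congr rfl fun i _ => Finset.sum_congr rfl fun j _ => by ring
  have hexpand : ∀ i j, (A - vecMulVec x x) i j ^ 2
      = A i j ^ 2 - 2 * (A i j * (x i * x j)) + (x i * x j) ^ 2 := fun i j => by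
    rw [Matrix.sub_apply, vecMulVec_apply]; ring
  simp only [frobenius_norm_sq_eq_sum, hexpand, Finset.sum_add_distrib, Finset.sum_sub_distrib,
    ← Finset.mul_sum, hxx, hAx]

theorem sq_dotProduct_add_sq_dotProduct_le {u v : n → ℝ} (hu : u ⬝ᵥ u = 1) (hv : v ⬝ᵥ v = 1)
    (huv : u ⬝ᵥ v = 0) (r : n → ℝ) : (r ⬝ᵥ u) ^ 2 + (r ⬝ᵥ v) ^ 2 ≤ r ⬝ᵥ r := by
  have h := dotProduct_star_self_nonneg (r - (r ⬝ᵥ u) • u - (r ⬝ᵥ v) • v)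
  simp only [star_trivial, sub_dotProduct, dotProduct_sub, smul_dotProduct, dotProduct_smul,
    smul_eq_mul, hu, hv, huv, dotProduct_comm v u, dotProduct_comm u r, dotProduct_comm v r] at h
  linarith

theorem dotProduct_mulVec_add_le_frobenius_norm_sq {u v : n → ℝ} (hu : u ⬝ᵥ u = 1)
    (hv : v ⬝ᵥ v = 1) (huv : u ⬝ᵥ v = 0) (S : Matrix m n ℝ) :
    S *ᵥ u ⬝ᵥ S *ᵥ u + S *ᵥ v ⬝ᵥ S *ᵥ v ≤ ‖S‖ ^ 2 := by
  rw [frobenius_norm_sq_eq_sum]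
  simp only [dotProduct, ← Finset.sum_add_distrib]
  refine Finset.sum_le_sum fun i _ => ?_
  simpa only [mulVec, dotProduct, sq] using sq_dotProduct_add_sq_dotProduct_le hu hv huv (S i)

theorem add_transpose_mulVec_eq_smul_of_forall_le {A : Matrix n n ℝ} {M : ℝ}
    (hle : ∀ z, z ⬝ᵥ A *ᵥ z ≤ M * (z ⬝ᵥ z)) {x : n → ℝ} (hx : x ⬝ᵥ A *ᵥ x = M * (x ⬝ᵥ x)) :
    (A + Aᵀ) *ᵥ x = (2 * M) • x := by
  classical
  -- `2M - (A + Aᵀ)` is positive semidefinite and its quadratic form vanishes at `x`.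
  set B : Matrix n n ℝ := (2 * M) • (1 : Matrix n n ℝ) - (A + Aᵀ)
  have hB : ∀ z, z ⬝ᵥ B *ᵥ z = 2 * (M * (z ⬝ᵥ z) - z ⬝ᵥ A *ᵥ z) := fun z => by
    simp only [B, sub_mulVec, add_mulVec, smul_mulVec, one_mulVec, dotProduct_sub,
      dotProduct_add, dotProduct_smul, dotProduct_transpose_mulVec, smul_eq_mul]
    ring
  have hBpsd : B.PosSemidef := by
    refine .of_dotProduct_mulVec_nonneg ?_ fun z => ?_
    · simp [B, IsHermitian, conjTranspose_eq_transpose_of_trivial, transpose_sub,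
        add_comm]
    · rw [star_trivial, hB]; linarith [hle z]
  have hBx : B *ᵥ x = 0 := (hBpsd.dotProduct_mulVec_zero_iff x).1 <| by
    rw [star_trivial, hB, hx, sub_self, mul_zero]
  simpa [B, sub_mulVec, smul_mulVec, sub_eq_zero, eq_comm] using hBx

theorem dotProduct_mulVec_le_of_forall_unit {A : Matrix n n ℝ} {M : ℝ}
    (h : ∀ z, z ⬝ᵥ z = 1 → z ⬝ᵥ A *ᵥ z ≤ M) (z : n → ℝ) : z ⬝ᵥ A *ᵥ z ≤ M * (z ⬝ᵥ z) := by
  rcases eq_or_ne z 0 with rfl | hz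
  · simp
  have hpos : 0 < z ⬝ᵥ z := by
    simpa only [star_trivial] using dotProduct_star_self_pos_iff.2 hz
  set c := (√(z ⬝ᵥ z))⁻¹
  have hc : c ^ 2 * (z ⬝ᵥ z) = 1 := by
    rw [inv_pow, Real.sq_sqrt hpos.le, inv_mul_cancel₀ hpos.ne']
  have := h (c • z) (by simpa [smul_dotProduct, dotProduct_smul, ← mul_assoc, sq] using hc)
  simp only [mulVec_smul, smul_dotProduct, dotProduct_smul, smul_eq_mul] at this
  calc z ⬝ᵥ A *ᵥ z = c * (c * z ⬝ᵥ A *ᵥ z) * (z ⬝ᵥ z) := by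
        linear_combination (-(z ⬝ᵥ A *ᵥ z)) * hc
    _ ≤ M * (z ⬝ᵥ z) := by gcongr

theorem dotProduct_self_sub_smul {x y : n → ℝ} (hx : x ⬝ᵥ x = 1) (hy : y ⬝ᵥ y = 1) :
    (y - (x ⬝ᵥ y) • x) ⬝ᵥ (y - (x ⬝ᵥ y) • x) = 1 - (x ⬝ᵥ y) ^ 2 := by
  simp only [sub_dotProduct, dotProduct_sub, smul_dotProduct, dotProduct_smul, smul_eq_mul, hx, hy,
    dotProduct_comm y x]
  ring

theorem sq_dotProduct_lt_one_of_vecMulVec_ne {x y : n → ℝ} (hx : x ⬝ᵥ x = 1) (hy : y ⬝ᵥ y = 1)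
    (hxy : vecMulVec x x ≠ vecMulVec y y) : (x ⬝ᵥ y) ^ 2 < 1 := by
  by_contra! hb
  have hw := dotProduct_self_sub_smul hx hy
  have hw0 : 0 ≤ (y - (x ⬝ᵥ y) • x) ⬝ᵥ (y - (x ⬝ᵥ y) • x) := by
    simpa only [star_trivial] using dotProduct_star_self_nonneg (y - (x ⬝ᵥ y) • x)
  have hb1 : (x ⬝ᵥ y) ^ 2 = 1 := by linarith
  have hyx : y = (x ⬝ᵥ y) • x := by
    rw [← sub_eq_zero, ← dotProduct_self_eq_zero, hw, hb1, sub_self]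
  apply hxy
  rw [hyx, smul_vecMulVec, vecMulVec_smul, smul_smul, ← sq, hb1, one_smul]

theorem two_mul_sq_le_frobenius_norm_sq {T : Matrix n n ℝ} {μ : ℝ} {x y : n → ℝ}
    (hx : x ⬝ᵥ x = 1) (hy : y ⬝ᵥ y = 1) (hxy : vecMulVec x x ≠ vecMulVec y y)
    (hTx : T *ᵥ x = μ • x) (hTy : T *ᵥ y = μ • y) : 2 * μ ^ 2 ≤ ‖T‖ ^ 2 := by
  set w := y - (x ⬝ᵥ y) • x
  have hw : 0 < w ⬝ᵥ w := by
    rw [dotProduct_self_sub_smul hx hy]; linarith [sq_dotProduct_lt_one_of_vecMulVec_ne hx hy hxy]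
  set v := (√(w ⬝ᵥ w))⁻¹ • w
  have hv : v ⬝ᵥ v = 1 := by
    simp only [v, smul_dotProduct, dotProduct_smul, smul_eq_mul, ← mul_assoc, ← sq, inv_pow,
      Real.sq_sqrt hw.le, inv_mul_cancel₀ hw.ne']
  have hxv : x ⬝ᵥ v = 0 := by
    simp only [v, w, dotProduct_smul, dotProduct_sub, hx, smul_eq_mul, mul_one, sub_self, mul_zero]
  have hTv : T *ᵥ v = μ • v := by
    simp only [v, w, mulVec_smul, mulVec_sub, hTx, hTy, smul_sub, smul_comm μ]
  have := dotProduct_mulVec_add_le_frobenius_norm_sq hx hv hxv T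
  simp only [hTx, hTv, smul_dotProduct, dotProduct_smul, smul_eq_mul, hx, hv] at this
  linarith

theorem dotProduct_vecMulVec_self_mulVec (u z : n → ℝ) :
    z ⬝ᵥ vecMulVec u u *ᵥ z = (u ⬝ᵥ z) ^ 2 := by
  rw [vecMulVec_mulVec, op_smul_eq_smul, dotProduct_smul, smul_eq_mul, dotProduct_comm, sq]

theorem norm_vecMulVec_self_add_vecMulVec_self_sq {u v : n → ℝ} (hu : u ⬝ᵥ u = 1)
    (hv : v ⬝ᵥ v = 1) (huv : u ⬝ᵥ v = 0) : ‖vecMulVec u u + vecMulVec v v‖ ^ 2 = 2 := by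
  have hexpand : ∀ i j, (vecMulVec u u + vecMulVec v v) i j ^ 2
      = u i ^ 2 * u j ^ 2 + 2 * (u i * v i) * (u j * v j) + v i ^ 2 * v j ^ 2 := fun i j => by
    simp only [Matrix.add_apply, vecMulVec_apply]; ring
  simp only [dotProduct, ← sq] at hu hv huv
  simp only [frobenius_norm_sq_eq_sum, hexpand, Finset.sum_add_distrib, ← Finset.mul_sum,
    ← Finset.sum_mul, hu, hv, huv]
  norm_num

def veronese (n : Type*) [Fintype n] : Set (Matrix n n ℝ) :=
  {P | ∃ x : EuclideanSpace ℝ n, ‖x‖ = 1 ∧ P = vecMulVec x x}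

theorem mem_veronese {P : Matrix n n ℝ} :
    P ∈ veronese n ↔ ∃ x : n → ℝ, x ⬝ᵥ x = 1 ∧ P = vecMulVec x x := by
  have hunit (x : EuclideanSpace ℝ n) : ‖x‖ = 1 ↔ x.ofLp ⬝ᵥ x.ofLp = 1 := by
    rw [← sq_eq_sq₀ (norm_nonneg x) zero_le_one, one_pow, ← real_inner_self_eq_norm_sq,
      EuclideanSpace.inner_eq_star_dotProduct, star_trivial]
  constructor
  · rintro ⟨x, hx, rfl⟩
    exact ⟨x, (hunit x).1 hx, rfl⟩
  · rintro ⟨x, hx, rfl⟩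
    exact ⟨WithLp.toLp 2 x, (hunit _).2 hx, rfl⟩

theorem isCompact_veronese : IsCompact (veronese n) := by
  have : veronese n = (fun x : EuclideanSpace ℝ n => vecMulVec x.ofLp x.ofLp) '' sphere 0 1 := by
    ext P; simp [veronese, eq_comm]
  rw [this]
  exact (isCompact_sphere 0 1).image <| continuous_pi fun i => continuous_pi fun j => by
    simp only [vecMulVec_apply]; fun_prop

theorem veronese_nonempty [Nonempty n] : (veronese n).Nonempty := by
  classical
  obtain ⟨i⟩ := ‹Nonempty n›
  exact ⟨_, mem_veronese.2 ⟨Pi.single i 1, by simp, rfl⟩⟩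

theorem dotProduct_mulVec_le_of_norm_sub_eq_infDist {A : Matrix n n ℝ} {x : n → ℝ}
    (hx : x ⬝ᵥ x = 1) (hxA : ‖A - vecMulVec x x‖ = infDist A (veronese n)) {z : n → ℝ}
    (hz : z ⬝ᵥ z = 1) : z ⬝ᵥ A *ᵥ z ≤ x ⬝ᵥ A *ᵥ x := by
  have h : ‖A - vecMulVec x x‖ ≤ ‖A - vecMulVec z z‖ := by
    rw [hxA, ← dist_eq_norm]; exact infDist_le_dist_of_mem (mem_veronese.2 ⟨z, hz, rfl⟩)
  have h2 := pow_le_pow_left₀ (norm_nonneg _) h 2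
  rw [norm_sub_vecMulVec_self_sq A hx, norm_sub_vecMulVec_self_sq A hz] at h2
  linarith

theorem half_le_infDist_sq_of_vecMulVec_ne {A : Matrix n n ℝ} {x y : n → ℝ}
    (hx : x ⬝ᵥ x = 1) (hy : y ⬝ᵥ y = 1) (hxy : vecMulVec x x ≠ vecMulVec y y)
    (hxA : ‖A - vecMulVec x x‖ = infDist A (veronese n))
    (hyA : ‖A - vecMulVec y y‖ = infDist A (veronese n)) :
    1 / 2 ≤ infDist A (veronese n) ^ 2 := by
  set M := x ⬝ᵥ A *ᵥ x
  have hle : ∀ z, z ⬝ᵥ A *ᵥ z ≤ M * (z ⬝ᵥ z) := dotProduct_mulVec_le_of_forall_unit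
    fun z hz => dotProduct_mulVec_le_of_norm_sub_eq_infDist hx hxA hz
  have hyM : y ⬝ᵥ A *ᵥ y = M := le_antisymm
    (dotProduct_mulVec_le_of_norm_sub_eq_infDist hx hxA hy)
    (dotProduct_mulVec_le_of_norm_sub_eq_infDist hy hyA hx)
  have hTx := add_transpose_mulVec_eq_smul_of_forall_le hle (x := x) (by rw [hx, mul_one])
  have hTy := add_transpose_mulVec_eq_smul_of_forall_le hle (x := y) (by rw [hy, mul_one, hyM])
  have hT := two_mul_sq_le_frobenius_norm_sq hx hy hxy hTx hTy
  have hA : ‖A + Aᵀ‖ ^ 2 ≤ (2 * ‖A‖) ^ 2 := by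
    refine pow_le_pow_left₀ (norm_nonneg _) ((norm_add_le _ _).trans_eq ?_) 2
    rw [frobenius_norm_transpose, two_mul]
  have hd : infDist A (veronese n) ^ 2 = ‖A‖ ^ 2 - 2 * M + 1 := by
    rw [← hxA, norm_sub_vecMulVec_self_sq A hx]
  nlinarith [sq_nonneg (2 * M - 1)]

theorem one_div_sqrt_two_sq : (1 / √2 : ℝ) ^ 2 = 1 / 2 := by
  rw [div_pow, one_pow, Real.sq_sqrt zero_le_two]

theorem existsUnique_nearest_of_infDist_lt [Nonempty n] {A : Matrix n n ℝ}
    (hA : infDist A (veronese n) < 1 / √2) :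
    ∃! P, P ∈ veronese n ∧ ‖A - P‖ = infDist A (veronese n) := by
  obtain ⟨P, hP, hPA⟩ := isCompact_veronese.exists_infDist_eq_dist veronese_nonempty A
  rw [dist_eq_norm] at hPA
  refine ⟨P, ⟨hP, hPA.symm⟩, fun Q ⟨hQ, hQA⟩ => ?_⟩
  by_contra hQP
  obtain ⟨x, hx, rfl⟩ := mem_veronese.1 hP
  obtain ⟨y, hy, rfl⟩ := mem_veronese.1 hQ
  have h := half_le_infDist_sq_of_vecMulVec_ne hx hy (Ne.symm hQP) hPA.symm hQA
  rw [← one_div_sqrt_two_sq, sq_le_sq₀ (by positivity) infDist_nonneg] at h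
  exact h.not_gt hA

section Midpoint

variable {u v : n → ℝ} (hu : u ⬝ᵥ u = 1) (hv : v ⬝ᵥ v = 1) (huv : u ⬝ᵥ v = 0)
include hu hv huv

theorem norm_half_smul_add_sub_vecMulVec_sq {z : n → ℝ} (hz : z ⬝ᵥ z = 1) :
    ‖(1 / 2 : ℝ) • (vecMulVec u u + vecMulVec v v) - vecMulVec z z‖ ^ 2
      = 3 / 2 - ((u ⬝ᵥ z) ^ 2 + (v ⬝ᵥ z) ^ 2) := by
  rw [norm_sub_vecMulVec_self_sq _ hz, norm_smul, mul_pow,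
    norm_vecMulVec_self_add_vecMulVec_self_sq hu hv huv, smul_mulVec, add_mulVec, dotProduct_smul,
    dotProduct_add, dotProduct_vecMulVec_self_mulVec, dotProduct_vecMulVec_self_mulVec,
    Real.norm_of_nonneg (by norm_num), smul_eq_mul]
  ring

theorem one_div_sqrt_two_le_norm_half_smul_add_sub {z : n → ℝ} (hz : z ⬝ᵥ z = 1) :
    1 / √2 ≤ ‖(1 / 2 : ℝ) • (vecMulVec u u + vecMulVec v v) - vecMulVec z z‖ := by
  rw [← sq_le_sq₀ (by positivity) (norm_nonneg _), one_div_sqrt_two_sq,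
    norm_half_smul_add_sub_vecMulVec_sq hu hv huv hz]
  have := sq_dotProduct_add_sq_dotProduct_le hu hv huv z
  rw [dotProduct_comm z u, dotProduct_comm z v, hz] at this
  linarith

theorem norm_half_smul_add_sub_vecMulVec_left :
    ‖(1 / 2 : ℝ) • (vecMulVec u u + vecMulVec v v) - vecMulVec u u‖ = 1 / √2 := by
  rw [← sq_eq_sq₀ (norm_nonneg _) (by positivity), one_div_sqrt_two_sq,
    norm_half_smul_add_sub_vecMulVec_sq hu hv huv hu, hu, dotProduct_comm, huv]
  norm_num

theorem infDist_half_smul_add :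
    infDist ((1 / 2 : ℝ) • (vecMulVec u u + vecMulVec v v)) (veronese n) = 1 / √2 := by
  have hmem : vecMulVec u u ∈ veronese n := mem_veronese.2 ⟨u, hu, rfl⟩
  refine le_antisymm ?_ ((le_infDist ⟨_, hmem⟩).2 fun P hP => ?_)
  · rw [← norm_half_smul_add_sub_vecMulVec_left hu hv huv, ← dist_eq_norm]
    exact infDist_le_dist_of_mem hmem
  · obtain ⟨z, hz, rfl⟩ := mem_veronese.1 hP
    rw [dist_eq_norm]
    exact one_div_sqrt_two_le_norm_half_smul_add_sub hu hv huv hz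

theorem not_existsUnique_nearest_half_smul_add :
    ¬ ∃! P, P ∈ veronese n ∧ ‖(1 / 2 : ℝ) • (vecMulVec u u + vecMulVec v v) - P‖
      = infDist ((1 / 2 : ℝ) • (vecMulVec u u + vecMulVec v v)) (veronese n) := by
  rintro ⟨P, -, hP⟩
  have hvu : v ⬝ᵥ u = 0 := by rwa [dotProduct_comm]
  have hPu : vecMulVec u u = P := hP _ ⟨mem_veronese.2 ⟨u, hu, rfl⟩, by
    rw [infDist_half_smul_add hu hv huv, norm_half_smul_add_sub_vecMulVec_left hu hv huv]⟩
  have hPv : vecMulVec v v = P := hP _ ⟨mem_veronese.2 ⟨v, hv, rfl⟩, by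
    rw [infDist_half_smul_add hu hv huv, add_comm,
      norm_half_smul_add_sub_vecMulVec_left hv hu hvu]⟩
  have h := congrArg (fun P => u ⬝ᵥ P *ᵥ u) (hPu.trans hPv.symm)
  simp only [dotProduct_vecMulVec_self_mulVec, hu, hvu] at h
  norm_num at h

end Midpoint

theorem reach_veronese [Nontrivial n] : reach (veronese n) = 1 / √2 := by
  classical
  obtain ⟨i, j, hij⟩ := exists_pair_ne n
  have hi : Pi.single i (1 : ℝ) ⬝ᵥ Pi.single i 1 = 1 := by simp
  have hj : Pi.single j (1 : ℝ) ⬝ᵥ Pi.single j 1 = 1 := by simp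
  have hij : Pi.single i (1 : ℝ) ⬝ᵥ Pi.single j 1 = 0 := by simp [hij]
  exact reach_eq_of_existsUnique_of_not_existsUnique (by positivity)
    (fun _ => existsUnique_nearest_of_infDist_lt) (infDist_half_smul_add hi hj hij)
    (not_existsUnique_nearest_half_smul_add hi hj hij)

theorem reach_RP2_embedded :
    1 / Real.sqrt 2 =
      sSup {t : ℝ | 0 ≤ t ∧ ∀ A : Matrix (Fin 3) (Fin 3) ℝ,
        Metric.infDist A RP2Embedded < t →
          ∃! P, P ∈ RP2Embedded ∧ ‖A - P‖ = Metric.infDist A RP2Embedded} :=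
  reach_veronese.symm
end
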